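/- arXiv:2401.10239 — 10 statements merged into one kernel-verified Lean document; each statement's English description precedes it below -/
import Mathlib

section
/- Let Z = LZ(M_z, G_z, c_z, S_z, A_z, b_z) ⊆ ℝ^n and Y = LZ(M_y, G_y, c_y, S_y, A_y, b_y) ⊆ ℝ^m be line zonotopes and R ∈ ℝ^{m×n}. Then the generalized intersection Z ∩_R Y = {z ∈ Z : Rz ∈ Y} equals the line zonotope with lines [M_z 0], generators [G_z 0], center c_z, and constraint matrices S = [blkdiag(S_z, S_y); (R M_z, −M_y)], A = [blkdiag(A_z, A_y); (R G_z, −G_y)], b = [b_z; b_y; c_y − R c_z], where the last constraint row blocks multiply the (δ_z, δ_y) and (ξ_z, ξ_y) variables respectively. -/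
open Matrix

/-- The line zonotope `LZ(M,G,c,S,A,b) = {c + Mδ + Gξ : δ ∈ ℝ^{n_δ}, ‖ξ‖_∞ ≤ 1, Sδ + Aξ = b}`. -/
def LZ {n nδ ng nc : Type*} [Fintype nδ] [Fintype ng]
    (M : Matrix n nδ ℝ) (G : Matrix n ng ℝ) (c : n → ℝ)
    (S : Matrix nc nδ ℝ) (A : Matrix nc ng ℝ) (b : nc → ℝ) : Set (n → ℝ) :=
  {x | ∃ (δ : nδ → ℝ) (ξ : ng → ℝ),
    (∀ i, |ξ i| ≤ 1) ∧ S *ᵥ δ + A *ᵥ ξ = b ∧ x = c + M *ᵥ δ + G *ᵥ ξ}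


/-!
Write a point of `Z` as `z = c_z + M_z δ_z + G_z ξ_z`. Then `R z ∈ Y`, witnessed by `(δ_y, ξ_y)`,
says `R (c_z + M_z δ_z + G_z ξ_z) = c_y + M_y δ_y + G_y ξ_y`, which after moving the constants to
the right is the last block row of the stacked constraint; the first two block rows are the
constraints of `Z` and `Y`, and the zero columns make the point independent of `(δ_y, ξ_y)`.
-/

section

variable {α : Type*} {m n d₁ d₂ g₁ g₂ c₁ c₂ c₃ : Type*}
  [Fintype d₁] [Fintype d₂] [Fintype g₁] [Fintype g₂]

theorem fromRows_fromBlocks_mulVec_add_eq_iff [Semiring α]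
    (S₁ : Matrix c₁ d₁ α) (S₂ : Matrix c₂ d₂ α) (T₁ : Matrix c₃ d₁ α) (T₂ : Matrix c₃ d₂ α)
    (A₁ : Matrix c₁ g₁ α) (A₂ : Matrix c₂ g₂ α) (U₁ : Matrix c₃ g₁ α) (U₂ : Matrix c₃ g₂ α)
    (δ₁ : d₁ → α) (δ₂ : d₂ → α) (ξ₁ : g₁ → α) (ξ₂ : g₂ → α)
    (b₁ : c₁ → α) (b₂ : c₂ → α) (b₃ : c₃ → α) :
    fromRows (fromBlocks S₁ 0 0 S₂) (fromCols T₁ T₂) *ᵥ Sum.elim δ₁ δ₂ +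
        fromRows (fromBlocks A₁ 0 0 A₂) (fromCols U₁ U₂) *ᵥ Sum.elim ξ₁ ξ₂ =
          Sum.elim (Sum.elim b₁ b₂) b₃ ↔
      S₁ *ᵥ δ₁ + A₁ *ᵥ ξ₁ = b₁ ∧ S₂ *ᵥ δ₂ + A₂ *ᵥ ξ₂ = b₂ ∧
        T₁ *ᵥ δ₁ + T₂ *ᵥ δ₂ + (U₁ *ᵥ ξ₁ + U₂ *ᵥ ξ₂) = b₃ := by
  simp only [fromRows_mulVec, fromBlocks_mulVec, fromCols_mulVec_sumElim, Sum.elim_comp_inl,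
    Sum.elim_comp_inr, zero_mulVec, add_zero, zero_add, ← Sum.elim_add_add, Sum.elim_eq_iff,
    and_assoc]

theorem mulVec_affine_eq_affine_iff [CommRing α] [Fintype n] (R : Matrix m n α) (c : n → α)
    (M : Matrix n d₁ α) (G : Matrix n g₁ α) (c' : m → α) (M' : Matrix m d₂ α) (G' : Matrix m g₂ α)
    (δ : d₁ → α) (ξ : g₁ → α) (δ' : d₂ → α) (ξ' : g₂ → α) :
    R *ᵥ (c + M *ᵥ δ + G *ᵥ ξ) = c' + M' *ᵥ δ' + G' *ᵥ ξ' ↔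
      (R * M) *ᵥ δ + (-M') *ᵥ δ' + ((R * G) *ᵥ ξ + (-G') *ᵥ ξ') = c' - R *ᵥ c := by
  simp only [mulVec_add, ← mulVec_mulVec, neg_mulVec]
  constructor <;> intro h <;> linear_combination h

end

theorem mem_LZ_sumElim_iff {n d₁ d₂ g₁ g₂ nc : Type*} [Fintype d₁] [Fintype d₂] [Fintype g₁]
    [Fintype g₂] {M : Matrix n (d₁ ⊕ d₂) ℝ} {G : Matrix n (g₁ ⊕ g₂) ℝ} {c : n → ℝ}
    {S : Matrix nc (d₁ ⊕ d₂) ℝ} {A : Matrix nc (g₁ ⊕ g₂) ℝ} {b : nc → ℝ} {x : n → ℝ} :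
    x ∈ LZ M G c S A b ↔ ∃ (δ₁ : d₁ → ℝ) (δ₂ : d₂ → ℝ) (ξ₁ : g₁ → ℝ) (ξ₂ : g₂ → ℝ),
      (∀ i, |ξ₁ i| ≤ 1) ∧ (∀ i, |ξ₂ i| ≤ 1) ∧ S *ᵥ Sum.elim δ₁ δ₂ + A *ᵥ Sum.elim ξ₁ ξ₂ = b ∧
        x = c + M *ᵥ Sum.elim δ₁ δ₂ + G *ᵥ Sum.elim ξ₁ ξ₂ := by
  constructor
  · rintro ⟨δ, ξ, hξ, hb, hx⟩
    refine ⟨δ ∘ Sum.inl, δ ∘ Sum.inr, ξ ∘ Sum.inl, ξ ∘ Sum.inr, fun i ↦ hξ _, fun i ↦ hξ _, ?_⟩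
    simpa only [Sum.elim_comp_inl_inr] using ⟨hb, hx⟩
  · rintro ⟨δ₁, δ₂, ξ₁, ξ₂, hξ₁, hξ₂, hb, hx⟩
    exact ⟨_, _, Sum.forall.2 ⟨hξ₁, hξ₂⟩, hb, hx⟩

/-- Generalized intersection of line zonotopes: `Z ∩_R Y = {z ∈ Z : Rz ∈ Y}` is the line
zonotope with lines `[M_z 0]`, generators `[G_z 0]`, center `c_z`, and constraints
`S = [blkdiag(S_z,S_y); (R M_z, −M_y)]`, `A = [blkdiag(A_z,A_y); (R G_z, −G_y)]`,
`b = [b_z; b_y; c_y − R c_z]`. -/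
theorem lz_generalized_intersection {n m dz gz ncz dy gy ncy : Type*}
    [Fintype n] [Fintype dz] [Fintype gz] [Fintype dy] [Fintype gy]
    (Mz : Matrix n dz ℝ) (Gz : Matrix n gz ℝ) (cz : n → ℝ)
    (Sz : Matrix ncz dz ℝ) (Az : Matrix ncz gz ℝ) (bz : ncz → ℝ)
    (My : Matrix m dy ℝ) (Gy : Matrix m gy ℝ) (cy : m → ℝ)
    (Sy : Matrix ncy dy ℝ) (Ay : Matrix ncy gy ℝ) (bY : ncy → ℝ)
    (R : Matrix m n ℝ) :
    {z ∈ LZ Mz Gz cz Sz Az bz | R *ᵥ z ∈ LZ My Gy cy Sy Ay bY} =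
      LZ (fromCols Mz (0 : Matrix n dy ℝ)) (fromCols Gz (0 : Matrix n gy ℝ)) cz
        (fromRows (fromBlocks Sz 0 0 Sy) (fromCols (R * Mz) (-My)))
        (fromRows (fromBlocks Az 0 0 Ay) (fromCols (R * Gz) (-Gy)))
        (Sum.elim (Sum.elim bz bY) (cy - R *ᵥ cz)) := by
  ext x
  simp only [Set.mem_sep_iff, mem_LZ_sumElim_iff, fromRows_fromBlocks_mulVec_add_eq_iff,
    fromCols_mulVec_sumElim, zero_mulVec, add_zero]
  constructor
  · rintro ⟨⟨δz, ξz, hξz, hbz, rfl⟩, δy, ξy, hξy, hbY, hR⟩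
    exact ⟨δz, δy, ξz, ξy, hξz, hξy, ⟨hbz, hbY, (mulVec_affine_eq_affine_iff ..).1 hR⟩, rfl⟩
  · rintro ⟨δz, δy, ξz, ξy, hξz, hξy, ⟨hbz, hbY, hR⟩, rfl⟩
    exact ⟨⟨δz, ξz, hξz, hbz, rfl⟩, δy, ξy, hξy, hbY, (mulVec_affine_eq_affine_iff ..).2 hR⟩
end

section
/- Line elimination is exact: let Z = LZ(M, G, c, S, A, b) ⊆ ℝ^n be a line zonotope and suppose S_{i,j} ≠ 0 for some constraint index i and line index j. Write M_{·j} for the j-th column of M, S_{·j} for the j-th column of S, and S_{i,·}, A_{i,·}, b_i for the i-th row of S, the i-th row of A and the i-th entry of b. Then Z equals the line zonotope LZ(M − S_{i,j}^{-1} M_{·j} S_{i,·}, G − S_{i,j}^{-1} M_{·j} A_{i,·}, c + S_{i,j}^{-1} b_i M_{·j}, S − S_{i,j}^{-1} S_{·j} S_{i,·}, A − S_{i,j}^{-1} S_{·j} A_{i,·}, b − S_{i,j}^{-1} b_i S_{·j}), i.e. the set obtained by solving the i-th constraint for δ_j and substituting it into the center expression and the remaining constraints yields exactly the same set (no conservatism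 is introduced). -/
/-!
Shifting `δ` by `t • e_j`, where `t = S_ij⁻¹ (b_i - S_i·δ - A_i·ξ)`, turns the eliminated
center map and constraint residual into the original ones. The shift vanishes whenever the
`i`-th original constraint holds, so feasible parameters of either description yield feasible
parameters of the other for the same point.
-/

open Matrix

namespace Matrix

variable {K m l : Type*} [CommRing K] [Fintype l]

theorem of_sub_mul_mulVec (P : Matrix m l K) (a : m → K) (q v : l → K) :
    (of fun k l => P k l - a k * q l) *ᵥ v = P *ᵥ v - (q ⬝ᵥ v) • a := by
  ext k
  simp only [mulVec, dotProduct, of_apply, sub_mul, Finset.sum_sub_distrib, Pi.sub_apply,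
    Pi.smul_apply, smul_eq_mul, Finset.sum_mul]
  congr 1
  exact Finset.sum_congr rfl fun _ _ => by ring

end Matrix

section LineElimination

variable {K m nδ ng : Type*} [Field K] [Fintype nδ] [Fintype ng] [DecidableEq nδ]
  (M : Matrix m nδ K) (G : Matrix m ng K) (p : nδ → K) (q : ng → K) (β s : K) (j : nδ)
  (δ : nδ → K) (ξ : ng → K)

theorem lineElim_point_eq (c : m → K) :
    (fun k => c k + s⁻¹ * β * M k j) + (of fun k l => M k l - s⁻¹ * M k j * p l) *ᵥ δ
        + (of fun k l => G k l - s⁻¹ * M k j * q l) *ᵥ ξ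
      = c + M *ᵥ (δ + Pi.single j (s⁻¹ * (β - p ⬝ᵥ δ - q ⬝ᵥ ξ))) + G *ᵥ ξ := by
  rw [of_sub_mul_mulVec, of_sub_mul_mulVec, mulVec_add, mulVec_single]
  ext k
  simp only [Pi.add_apply, Pi.sub_apply, Pi.smul_apply, smul_eq_mul, col_apply, op_smul_eq_mul]
  ring

theorem lineElim_residual_eq (b : m → K) :
    (of fun r l => M r l - s⁻¹ * M r j * p l) *ᵥ δ
        + (of fun r l => G r l - s⁻¹ * M r j * q l) *ᵥ ξ - (fun r => b r - s⁻¹ * β * M r j)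
      = M *ᵥ (δ + Pi.single j (s⁻¹ * (β - p ⬝ᵥ δ - q ⬝ᵥ ξ))) + G *ᵥ ξ - b := by
  rw [of_sub_mul_mulVec, of_sub_mul_mulVec, mulVec_add, mulVec_single]
  ext r
  simp only [Pi.add_apply, Pi.sub_apply, Pi.smul_apply, smul_eq_mul, col_apply, op_smul_eq_mul]
  ring

end LineElimination

theorem lz_line_elimination_general {n nδ ng nc : Type*}
    [Fintype nδ] [Fintype ng]
    (M : Matrix n nδ ℝ) (G : Matrix n ng ℝ) (c : n → ℝ)
    (S : Matrix nc nδ ℝ) (A : Matrix nc ng ℝ) (b : nc → ℝ)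
    (i : nc) (j : nδ) :
    LZ M G c S A b =
      LZ (Matrix.of fun k l => M k l - (S i j)⁻¹ * M k j * S i l)
         (Matrix.of fun k l => G k l - (S i j)⁻¹ * M k j * A i l)
         (fun k => c k + (S i j)⁻¹ * b i * M k j)
         (Matrix.of fun r l => S r l - (S i j)⁻¹ * S r j * S i l)
         (Matrix.of fun r l => A r l - (S i j)⁻¹ * S r j * A i l)
         (fun r => b r - (S i j)⁻¹ * b i * S r j) := by
  classical
  ext x
  constructor
  · rintro ⟨δ, ξ, hξ, hfeas, rfl⟩
    have hrow : b i - S i ⬝ᵥ δ - A i ⬝ᵥ ξ = 0 := by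
      rw [← hfeas]; simp only [Pi.add_apply, mulVec]; ring
    have hshift : δ + Pi.single j ((S i j)⁻¹ * (b i - S i ⬝ᵥ δ - A i ⬝ᵥ ξ)) = δ := by
      rw [hrow, mul_zero, Pi.single_zero, add_zero]
    refine ⟨δ, ξ, hξ, ?_, ?_⟩
    · rw [← sub_eq_zero, lineElim_residual_eq, hshift, sub_eq_zero, hfeas]
    · rw [lineElim_point_eq, hshift]
  · rintro ⟨δ, ξ, hξ, hfeas, rfl⟩
    refine ⟨_, ξ, hξ, ?_, lineElim_point_eq M G (S i) (A i) (b i) (S i j) j δ ξ c⟩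
    rw [← sub_eq_zero, ← lineElim_residual_eq, sub_eq_zero, hfeas]

/-- Line elimination is exact: if `S i j ≠ 0`, solving the `i`-th constraint for `δ_j`
and substituting into the center expression and the remaining constraints yields
exactly the same set. -/
theorem lz_line_elimination {n nδ ng nc : Type*}
    [Fintype nδ] [Fintype ng] [DecidableEq nδ]
    (M : Matrix n nδ ℝ) (G : Matrix n ng ℝ) (c : n → ℝ)
    (S : Matrix nc nδ ℝ) (A : Matrix nc ng ℝ) (b : nc → ℝ)
    (i : nc) (j : nδ) (hij : S i j ≠ 0) :
    LZ M G c S A b =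
      LZ (Matrix.of fun k l => M k l - (S i j)⁻¹ * M k j * S i l)
         (Matrix.of fun k l => G k l - (S i j)⁻¹ * M k j * A i l)
         (fun k => c k + (S i j)⁻¹ * b i * M k j)
         (Matrix.of fun r l => S r l - (S i j)⁻¹ * S r j * S i l)
         (Matrix.of fun r l => A r l - (S i j)⁻¹ * S r j * A i l)
         (fun r => b r - (S i j)⁻¹ * b i * S r j) :=
  lz_line_elimination_general M G c S A b i j
end

section
/- Prediction-step enclosure for linear descriptor systems (Lemma 1): Let n_z ≤ n and write z ∈ ℝ^n as z = (z̃, ž) with z̃ ∈ ℝ^{n_z}, ž ∈ ℝ^{n−n_z}. Let Ã ∈ ℝ^{n_z×n}, B̃ ∈ ℝ^{n_z×n_u}, B̃_w ∈ ℝ^{n_z×n_w}, Ǎ ∈ ℝ^{(n−n_z)×n}, B̌ ∈ ℝ^{(n−n_z)×n_u}, B̌_w ∈ ℝ^{(n−n_z)×n_w}, and let u_{k−1}, u_k ∈ ℝ^{n_u}. Suppose z_{k−1} ∈ Ẑ = LZ(M̂, Ĝ, ĉ, Ŝ, Â, b̂) ⊆ ℝ^n, w_{k−1}, w_k ∈ W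 = LZ(M_w, G_w, c_w, S_w, A_w, b_w) ⊆ ℝ^{n_w}, and that z_k = (z̃_k, ž_k) satisfies z̃_k = Ã z_{k−1} + B̃ u_{k−1} + B̃_w w_{k−1} and 0 = Ǎ z_k + B̌ u_k + B̌_w w_k. Then z_k ∈ Z̄ = LZ(M̄, Ḡ, c̄, S̄, Ā, b̄), where, with block columns ordered as (δ_{k−1}, ϑ_{k−1}, ϑ_k, δ_R) for lines and (ξ_{k−1}, φ_{k−1}, φ_k) for generators: c̄ = [Ã ĉ + B̃ u_{k−1} + B̃_w c_w; 0_{n−n_z}]; M̄ = [(Ã M̂, B̃_w M_w, 0, 0); (0, 0, 0, I_{n−n_z})]; Ḡ = [(Ã Ĝ, B̃_w G_w, 0); (0, 0, 0)]; S̄ has top block rows blkdiag(Ŝ, S_w, S_w) with a zero column block for δ_R, and bottom row (Ǎ [Ã M̂; 0], Ǎ [B̃_w M_w; 0], B̌_w M_w, Ǎ [0; I_{n−n_z}]); Ā has top block rows blkdiag(Â, A_w, A_w) and bottom row (Ǎ [Ã Ĝ; 0], Ǎ [B̃_w G_w; 0], B̌_w G_w); and b̄ = [b̂; b_w; b_w;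 −Ǎ [Ã ĉ + B̃ u_{k−1} + B̃_w c_w; 0_{n−n_z}] − B̌ u_k − B̌_w c_w]. -/
/-!
Take the line and generator coordinates of `z_{k-1} ∈ Ẑ`, `w_{k-1} ∈ W` and `w_k ∈ W`, and use
the static part `ž_k` itself as the free line coordinate `δ_R`. The dynamics then give
`z_k = c̄ + M̄ δ̄ + Ḡ ξ̄`, the first three block rows of `S̄ δ̄ + Ā ξ̄ = b̄` are the constraints of
`Ẑ` and `W`, and its last block row is the static constraint `Ǎ z_k + B̌ u_k + B̌_w w_k = 0`
with these parametrizations of `z_k` and `w_k` substituted.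
-/

open Matrix

section BlockProducts

variable {α β γ ω ch cw' dh dw gh gw : Type*}
  (x : dh → ℝ) (y t : dw → ℝ) (r : β → ℝ) (e : gh → ℝ) (f g : gw → ℝ)

theorem fromBlocks_fromCols_mulVec_sumElim_add
    [Fintype β] [DecidableEq β] [Fintype dh] [Fintype dw] [Fintype gh] [Fintype gw]
    (P₁ : Matrix α dh ℝ) (P₂ : Matrix α dw ℝ) (Q₁ : Matrix α gh ℝ) (Q₂ : Matrix α gw ℝ) :
    fromBlocks (fromCols P₁ P₂) 0 0 (fromCols (0 : Matrix β dw ℝ) (1 : Matrix β β ℝ)) *ᵥ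
        Sum.elim (Sum.elim x y) (Sum.elim t r) +
      fromBlocks (fromCols Q₁ Q₂) (0 : Matrix α gw ℝ) 0 0 *ᵥ Sum.elim (Sum.elim e f) g =
    Sum.elim (P₁ *ᵥ x + P₂ *ᵥ y + (Q₁ *ᵥ e + Q₂ *ᵥ f)) r := by
  simp [fromBlocks_mulVec, ← Sum.elim_add_add]

theorem fromBlocks_fromBlocks_mulVec_sumElim_add
    [Fintype β] [Fintype dh] [Fintype dw] [Fintype gh] [Fintype gw]
    (S : Matrix ch dh ℝ) (A : Matrix ch gh ℝ) (Sw : Matrix cw' dw ℝ) (Aw : Matrix cw' gw ℝ) :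
    fromBlocks (fromBlocks S 0 0 Sw) 0 0 (fromCols Sw (0 : Matrix cw' β ℝ)) *ᵥ
        Sum.elim (Sum.elim x y) (Sum.elim t r) +
      fromBlocks (fromBlocks A 0 0 Aw) 0 0 Aw *ᵥ Sum.elim (Sum.elim e f) g =
    Sum.elim (Sum.elim (S *ᵥ x + A *ᵥ e) (Sw *ᵥ y + Aw *ᵥ f)) (Sw *ᵥ t + Aw *ᵥ g) := by
  simp [fromBlocks_mulVec, ← Sum.elim_add_add]

theorem fromCols_mul_fromRows_mulVec_sumElim_add
    [Fintype α] [Fintype β] [DecidableEq β] [Fintype ω]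
    [Fintype dh] [Fintype dw] [Fintype gh] [Fintype gw]
    (C : Matrix γ (α ⊕ β) ℝ) (K : Matrix γ ω ℝ) (Mw : Matrix ω dw ℝ) (Gw : Matrix ω gw ℝ)
    (P₁ : Matrix α dh ℝ) (P₂ : Matrix α dw ℝ) (Q₁ : Matrix α gh ℝ) (Q₂ : Matrix α gw ℝ) :
    fromCols (fromCols (C * fromRows P₁ (0 : Matrix β dh ℝ)) (C * fromRows P₂ (0 : Matrix β dw ℝ)))
        (fromCols (K * Mw) (C * fromRows (0 : Matrix α β ℝ) (1 : Matrix β β ℝ))) *ᵥ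
        Sum.elim (Sum.elim x y) (Sum.elim t r) +
      fromCols (fromCols (C * fromRows Q₁ (0 : Matrix β gh ℝ))
        (C * fromRows Q₂ (0 : Matrix β gw ℝ))) (K * Gw) *ᵥ Sum.elim (Sum.elim e f) g =
    C *ᵥ Sum.elim (P₁ *ᵥ x + P₂ *ᵥ y + (Q₁ *ᵥ e + Q₂ *ᵥ f)) r + K *ᵥ (Mw *ᵥ t + Gw *ᵥ g) := by
  simp only [fromCols_mulVec_sumElim, ← mulVec_mulVec, fromRows_mulVec, zero_mulVec, one_mulVec,
    mulVec_add]
  have hsplit : Sum.elim (P₁ *ᵥ x + P₂ *ᵥ y + (Q₁ *ᵥ e + Q₂ *ᵥ f)) r =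
      Sum.elim (P₁ *ᵥ x) 0 + Sum.elim (P₂ *ᵥ y) 0 + Sum.elim (0 : α → ℝ) r +
        (Sum.elim (Q₁ *ᵥ e) 0 + Sum.elim (Q₂ *ᵥ f) 0) := by
    simp [← Sum.elim_add_add]
  rw [hsplit]
  simp only [mulVec_add]
  abel

end BlockProducts

-- The state index is `α ⊕ β`: `α` carries the dynamic part `z̃`, `β` the static part `ž`.
/-- Prediction-step enclosure for linear descriptor systems (Lemma 1).
The state index is `α ⊕ β` where `α` carries the dynamic part `z̃` and `β` the static
part `ž`.  If `z_{k-1} ∈ Ẑ`, `w_{k-1}, w_k ∈ W`, the dynamics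
`z̃_k = Ã z_{k-1} + B̃ u_{k-1} + B̃_w w_{k-1}` hold and the static constraint
`0 = Ǎ z_k + B̌ u_k + B̌_w w_k` holds, then `z_k ∈ Z̄ = LZ(M̄,Ḡ,c̄,S̄,Ā,b̄)` with the
block matrices of Lemma 1 (line blocks ordered `(δ_{k−1}, ϑ_{k−1}, ϑ_k, δ_R)`,
generator blocks ordered `(ξ_{k−1}, φ_{k−1}, φ_k)`). -/
theorem lz_prediction_step
    {α β υ ω dh gh ch dw gw cw' : Type*}
    [Fintype α] [Fintype β] [DecidableEq β] [Fintype υ] [Fintype ω]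
    [Fintype dh] [Fintype gh] [Fintype dw] [Fintype gw]
    (tA : Matrix α (α ⊕ β) ℝ) (tB : Matrix α υ ℝ) (tBw : Matrix α ω ℝ)
    (cA : Matrix β (α ⊕ β) ℝ) (cB : Matrix β υ ℝ) (cBw : Matrix β ω ℝ)
    (u0 u1 : υ → ℝ)
    (hM : Matrix (α ⊕ β) dh ℝ) (hG : Matrix (α ⊕ β) gh ℝ) (hc : (α ⊕ β) → ℝ)
    (hS : Matrix ch dh ℝ) (hA : Matrix ch gh ℝ) (hb : ch → ℝ)
    (Mw : Matrix ω dw ℝ) (Gw : Matrix ω gw ℝ) (cw : ω → ℝ)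
    (Sw : Matrix cw' dw ℝ) (Aw : Matrix cw' gw ℝ) (bw : cw' → ℝ)
    (zprev zk : (α ⊕ β) → ℝ) (wprev wk : ω → ℝ)
    (hz : zprev ∈ LZ hM hG hc hS hA hb)
    (hw1 : wprev ∈ LZ Mw Gw cw Sw Aw bw)
    (hw2 : wk ∈ LZ Mw Gw cw Sw Aw bw)
    (hdyn : ∀ a, zk (Sum.inl a) = (tA *ᵥ zprev + tB *ᵥ u0 + tBw *ᵥ wprev) a)
    (hstat : cA *ᵥ zk + cB *ᵥ u1 + cBw *ᵥ wk = 0) :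
    zk ∈ LZ
      -- M̄
      (fromBlocks (fromCols (tA * hM) (tBw * Mw)) 0
                  0 (fromCols (0 : Matrix β dw ℝ) (1 : Matrix β β ℝ)))
      -- Ḡ
      (fromBlocks (fromCols (tA * hG) (tBw * Gw)) (0 : Matrix α gw ℝ) 0 0)
      -- c̄
      (Sum.elim (tA *ᵥ hc + tB *ᵥ u0 + tBw *ᵥ cw) 0)
      -- S̄
      (fromRows
        (fromBlocks (fromBlocks hS 0 0 Sw) 0
                    0 (fromCols Sw (0 : Matrix cw' β ℝ)))
        (fromCols
          (fromCols (cA * fromRows (tA * hM) (0 : Matrix β dh ℝ))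
                       (cA * fromRows (tBw * Mw) (0 : Matrix β dw ℝ)))
          (fromCols (cBw * Mw)
                       (cA * fromRows (0 : Matrix α β ℝ) (1 : Matrix β β ℝ)))))
      -- Ā
      (fromRows
        (fromBlocks (fromBlocks hA 0 0 Aw) 0 0 Aw)
        (fromCols
          (fromCols (cA * fromRows (tA * hG) (0 : Matrix β gh ℝ))
                       (cA * fromRows (tBw * Gw) (0 : Matrix β gw ℝ)))
          (cBw * Gw)))
      -- b̄
      (Sum.elim (Sum.elim (Sum.elim hb bw) bw)
        (-(cA *ᵥ (Sum.elim (tA *ᵥ hc + tB *ᵥ u0 + tBw *ᵥ cw) 0))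
          - cB *ᵥ u1 - cBw *ᵥ cw)) := by
  obtain ⟨δ, ξ, hξ, hconstr, rfl⟩ := hz
  obtain ⟨θ₀, φ₀, hφ₀, hconstr₀, rfl⟩ := hw1
  obtain ⟨θ₁, φ₁, hφ₁, hconstr₁, rfl⟩ := hw2
  set center : α ⊕ β → ℝ := Sum.elim (tA *ᵥ hc + tB *ᵥ u0 + tBw *ᵥ cw) 0
  have hzk : zk = center + Sum.elim ((tA * hM) *ᵥ δ + (tBw * Mw) *ᵥ θ₀ +
      ((tA * hG) *ᵥ ξ + (tBw * Gw) *ᵥ φ₀)) (zk ∘ Sum.inr) := by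
    ext (a | b)
    · simp only [hdyn a, center, Pi.add_apply, Sum.elim_inl, mulVec_add, ← mulVec_mulVec]
      ring
    · simp [center]
  refine ⟨Sum.elim (Sum.elim δ θ₀) (Sum.elim θ₁ (zk ∘ Sum.inr)), Sum.elim (Sum.elim ξ φ₀) φ₁,
    ?_, ?_, ?_⟩
  · rintro ((i | i) | i)
    exacts [hξ i, hφ₀ i, hφ₁ i]
  · rw [fromRows_mulVec, fromRows_mulVec, ← Sum.elim_add_add, fromBlocks_fromBlocks_mulVec_sumElim_add,
      fromCols_mul_fromRows_mulVec_sumElim_add, hconstr, hconstr₀, hconstr₁]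
    congr 1
    rw [hzk] at hstat
    simp only [mulVec_add] at hstat ⊢
    linear_combination (norm := module) hstat
  · rw [add_assoc, fromBlocks_fromCols_mulVec_sumElim_add]
    exact hzk
end

section
/- Exactness of the prediction step (Remark 4): In the setting of Lemma 1 (same matrices Ã, B̃, B̃_w, Ǎ, B̌, B̌_w, inputs u_{k−1}, u_k, line zonotopes Ẑ ⊆ ℝ^n and W ⊆ ℝ^{n_w}, and Z̄ = LZ(M̄, Ḡ, c̄, S̄, Ā, b̄) constructed exactly as in Lemma 1), the enclosure is exact: Z̄ = { z_k = (Ã z_{k−1} + B̃ u_{k−1} + B̃_w w_{k−1}, ž_k) : z_{k−1} ∈ Ẑ, ž_k ∈ ℝ^{n−n_z}, w_{k−1} ∈ W, w_k ∈ W, and Ǎ z_k + B̌ u_k + B̌_w w_k = 0 }, i.e. Z̄ equals exactly the feasible state set at time k, not merely an outer enclosure. -/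
/-!
Line zonotopes are closed under three operations that are computed exactly on their data:
Cartesian products (block-diagonal data), intersection with an affine subspace `{x | R x = r}`
(append the rows `R M`, `R G` with right-hand side `r - R c`), and affine images `x ↦ L x + d`
(multiply `M`, `G`, `c` by `L`). The feasible set at time `k` is the image, under
`(z_{k-1}, w_{k-1}, w_k, ž_k) ↦ (Ã z_{k-1} + B̃ u_{k-1} + B̃_w w_{k-1}, ž_k)`, of those points of
`Ẑ × W × W × ℝ^{n-n_z}` that satisfy the algebraic equation, which is linear in these coordinates;
carrying out the three operations and multiplying out the blocks gives exactly the data of `Z̄`.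
-/

open Matrix

namespace LZ

variable {m n n₁ n₂ nδ nδ₁ nδ₂ ng ng₁ ng₂ nc nc₁ nc₂ : Type*}
  [Fintype nδ] [Fintype nδ₁] [Fintype nδ₂] [Fintype ng] [Fintype ng₁] [Fintype ng₂]

theorem image_mulVec_add [Fintype n] (L : Matrix m n ℝ) (d : m → ℝ)
    (M : Matrix n nδ ℝ) (G : Matrix n ng ℝ) (c : n → ℝ)
    (S : Matrix nc nδ ℝ) (A : Matrix nc ng ℝ) (b : nc → ℝ) :
    (fun x => L *ᵥ x + d) '' LZ M G c S A b = LZ (L * M) (L * G) (L *ᵥ c + d) S A b := by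
  ext y
  simp only [LZ, Set.mem_image, Set.mem_ofPred_eq]
  constructor
  · rintro ⟨x, ⟨δ, ξ, hξ, hb, rfl⟩, rfl⟩
    refine ⟨δ, ξ, hξ, hb, ?_⟩
    simp only [mulVec_add, mulVec_mulVec]
    abel
  · rintro ⟨δ, ξ, hξ, hb, rfl⟩
    refine ⟨_, ⟨δ, ξ, hξ, hb, rfl⟩, ?_⟩
    simp only [mulVec_add, mulVec_mulVec]
    abel

theorem inter_setOf_mulVec_eq [Fintype n] (M : Matrix n nδ ℝ) (G : Matrix n ng ℝ)
    (c : n → ℝ) (S : Matrix nc nδ ℝ) (A : Matrix nc ng ℝ) (b : nc → ℝ)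
    (R : Matrix m n ℝ) (r : m → ℝ) :
    LZ M G c S A b ∩ {x | R *ᵥ x = r} =
      LZ M G c (fromRows S (R * M)) (fromRows A (R * G)) (Sum.elim b (r - R *ᵥ c)) := by
  ext x
  have hR (δ : nδ → ℝ) (ξ : ng → ℝ) :
      R *ᵥ (c + M *ᵥ δ + G *ᵥ ξ) = (R * M) *ᵥ δ + (R * G) *ᵥ ξ + R *ᵥ c := by
    simp only [mulVec_add, mulVec_mulVec]
    abel
  simp only [LZ, Set.mem_inter_iff, Set.mem_ofPred_eq, fromRows_mulVec, ← Sum.elim_add_add,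
    Sum.elim_eq_iff, eq_sub_iff_add_eq]
  constructor
  · rintro ⟨⟨δ, ξ, hξ, hb, rfl⟩, hr⟩
    exact ⟨δ, ξ, hξ, ⟨hb, (hR δ ξ).symm.trans hr⟩, rfl⟩
  · rintro ⟨δ, ξ, hξ, ⟨hb, hr⟩, rfl⟩
    exact ⟨⟨δ, ξ, hξ, hb, rfl⟩, (hR δ ξ).trans hr⟩

theorem setOf_comp_inl_mem_and_comp_inr_mem
    (M₁ : Matrix n₁ nδ₁ ℝ) (G₁ : Matrix n₁ ng₁ ℝ) (c₁ : n₁ → ℝ)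
    (S₁ : Matrix nc₁ nδ₁ ℝ) (A₁ : Matrix nc₁ ng₁ ℝ) (b₁ : nc₁ → ℝ)
    (M₂ : Matrix n₂ nδ₂ ℝ) (G₂ : Matrix n₂ ng₂ ℝ) (c₂ : n₂ → ℝ)
    (S₂ : Matrix nc₂ nδ₂ ℝ) (A₂ : Matrix nc₂ ng₂ ℝ) (b₂ : nc₂ → ℝ) :
    {x : n₁ ⊕ n₂ → ℝ |
        x ∘ Sum.inl ∈ LZ M₁ G₁ c₁ S₁ A₁ b₁ ∧ x ∘ Sum.inr ∈ LZ M₂ G₂ c₂ S₂ A₂ b₂} =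
      LZ (fromBlocks M₁ 0 0 M₂) (fromBlocks G₁ 0 0 G₂) (Sum.elim c₁ c₂)
        (fromBlocks S₁ 0 0 S₂) (fromBlocks A₁ 0 0 A₂) (Sum.elim b₁ b₂) := by
  ext x
  obtain ⟨x₁, x₂, rfl⟩ : ∃ x₁ x₂, x = Sum.elim x₁ x₂ := ⟨_, _, (Sum.elim_comp_inl_inr x).symm⟩
  simp only [LZ, Set.mem_ofPred_eq, Sum.exists_sum, Sum.forall, fromBlocks_mulVec, zero_mulVec,
    add_zero, zero_add, ← Sum.elim_add_add, Sum.elim_eq_iff, Function.comp_def]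
  constructor
  · rintro ⟨⟨δ₁, ξ₁, hξ₁, hb₁, hx₁⟩, δ₂, ξ₂, hξ₂, hb₂, hx₂⟩
    exact ⟨δ₁, δ₂, ξ₁, ξ₂, ⟨hξ₁, hξ₂⟩, ⟨hb₁, hb₂⟩, hx₁, hx₂⟩
  · rintro ⟨δ₁, δ₂, ξ₁, ξ₂, ⟨hξ₁, hξ₂⟩, ⟨hb₁, hb₂⟩, hx₁, hx₂⟩
    exact ⟨⟨δ₁, ξ₁, hξ₁, hb₁, hx₁⟩, δ₂, ξ₂, hξ₂, hb₂, hx₂⟩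

theorem setOf_comp_inl_mem [Fintype m] [DecidableEq m] (M : Matrix n nδ ℝ) (G : Matrix n ng ℝ)
    (c : n → ℝ) (S : Matrix nc nδ ℝ) (A : Matrix nc ng ℝ) (b : nc → ℝ) :
    {x : n ⊕ m → ℝ | x ∘ Sum.inl ∈ LZ M G c S A b} =
      LZ (fromBlocks M 0 0 (1 : Matrix m m ℝ)) (fromRows G 0) (Sum.elim c 0)
        (fromCols S (0 : Matrix nc m ℝ)) A b := by
  ext x
  obtain ⟨x₁, x₂, rfl⟩ : ∃ x₁ x₂, x = Sum.elim x₁ x₂ := ⟨_, _, (Sum.elim_comp_inl_inr x).symm⟩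
  simp only [LZ, Set.mem_ofPred_eq, Sum.exists_sum, fromBlocks_mulVec, fromRows_mulVec,
    fromCols_mulVec, zero_mulVec, one_mulVec, add_zero, zero_add, ← Sum.elim_add_add,
    Sum.elim_eq_iff, Function.comp_def, Sum.elim_inl]
  constructor
  · rintro ⟨δ, ξ, hξ, hb, hx⟩
    exact ⟨δ, x₂, ξ, hξ, hb, hx, rfl⟩
  · rintro ⟨δ, -, ξ, hξ, hb, hx, -⟩
    exact ⟨δ, ξ, hξ, hb, hx⟩

end LZ

section Prediction

variable {α β υ ω : Type*} [Fintype α] [Fintype β] [DecidableEq β] [Fintype ω]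

/- Both matrices act on `p = (z_{k-1}, w_{k-1}, w_k, ž_k)`; the zero blocks carry type ascriptions
because otherwise `*` is elaborated through `CStarMatrix`. -/

def predictionLift (tA : Matrix α (α ⊕ β) ℝ) (tBw : Matrix α ω ℝ) :
    Matrix (α ⊕ β) (((α ⊕ β) ⊕ ω) ⊕ (ω ⊕ β)) ℝ :=
  fromBlocks (fromCols tA tBw) 0 0 (fromCols (0 : Matrix β ω ℝ) 1)

def predictionConstraint (tA : Matrix α (α ⊕ β) ℝ) (tBw : Matrix α ω ℝ)
    (cA : Matrix β (α ⊕ β) ℝ) (cBw : Matrix β ω ℝ) :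
    Matrix β (((α ⊕ β) ⊕ ω) ⊕ (ω ⊕ β)) ℝ :=
  fromCols (fromCols (cA * fromRows tA (0 : Matrix β (α ⊕ β) ℝ))
      (cA * fromRows tBw (0 : Matrix β ω ℝ)))
    (fromCols cBw (cA * fromRows (0 : Matrix α β ℝ) (1 : Matrix β β ℝ)))

variable (tA : Matrix α (α ⊕ β) ℝ) (tBw : Matrix α ω ℝ) (cA : Matrix β (α ⊕ β) ℝ)
  (cBw : Matrix β ω ℝ)

theorem predictionLift_mulVec (z : α ⊕ β → ℝ) (w w' : ω → ℝ) (y : β → ℝ) :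
    predictionLift tA tBw *ᵥ Sum.elim (Sum.elim z w) (Sum.elim w' y) =
      Sum.elim (tA *ᵥ z + tBw *ᵥ w) y := by
  simp [predictionLift, fromBlocks_mulVec]

theorem predictionConstraint_mulVec (z : α ⊕ β → ℝ) (w w' : ω → ℝ) (y : β → ℝ) :
    predictionConstraint tA tBw cA cBw *ᵥ Sum.elim (Sum.elim z w) (Sum.elim w' y) =
      cA *ᵥ Sum.elim (tA *ᵥ z + tBw *ᵥ w) y + cBw *ᵥ w' := by
  simp only [predictionConstraint, fromCols_mulVec_sumElim, ← mulVec_mulVec, fromRows_mulVec,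
    zero_mulVec, one_mulVec, ← mulVec_add]
  rw [add_comm (cBw *ᵥ w'), ← add_assoc, ← mulVec_add]
  simp only [← Sum.elim_add_add, add_zero, zero_add]

theorem prediction_feasible_set_eq_image [Fintype υ] (tB : Matrix α υ ℝ) (cB : Matrix β υ ℝ)
    (u0 u1 : υ → ℝ) (Z : Set (α ⊕ β → ℝ)) (W : Set (ω → ℝ)) :
    {zk : α ⊕ β → ℝ | ∃ zprev ∈ Z, ∃ wprev ∈ W, ∃ wk ∈ W,
        (∀ a, zk (Sum.inl a) = (tA *ᵥ zprev + tB *ᵥ u0 + tBw *ᵥ wprev) a)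
        ∧ cA *ᵥ zk + cB *ᵥ u1 + cBw *ᵥ wk = 0} =
      (fun p => predictionLift tA tBw *ᵥ p + Sum.elim (tB *ᵥ u0) 0) ''
        ({p | p ∘ Sum.inl ∈ {q | q ∘ Sum.inl ∈ Z ∧ q ∘ Sum.inr ∈ W} ∧
            p ∘ Sum.inr ∈ {q : ω ⊕ β → ℝ | q ∘ Sum.inl ∈ W}} ∩
          {p | predictionConstraint tA tBw cA cBw *ᵥ p =
            -(cA *ᵥ Sum.elim (tB *ᵥ u0) 0) - cB *ᵥ u1}) := by
  have hconstraint (z : α ⊕ β → ℝ) (w w' : ω → ℝ) (y : β → ℝ) :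
      cA *ᵥ (Sum.elim (tA *ᵥ z + tBw *ᵥ w) y + Sum.elim (tB *ᵥ u0) 0) + cB *ᵥ u1 + cBw *ᵥ w' =
        predictionConstraint tA tBw cA cBw *ᵥ Sum.elim (Sum.elim z w) (Sum.elim w' y) -
          (-(cA *ᵥ Sum.elim (tB *ᵥ u0) 0) - cB *ᵥ u1) := by
    rw [predictionConstraint_mulVec, mulVec_add]
    abel
  ext zk
  simp only [Set.mem_ofPred_eq, Set.mem_image, Set.mem_inter_iff]
  constructor
  · rintro ⟨zprev, hz, wprev, hw, wk, hwk, hstate, hdyn⟩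
    have hzk :
        Sum.elim (tA *ᵥ zprev + tBw *ᵥ wprev) (zk ∘ Sum.inr) + Sum.elim (tB *ᵥ u0) 0 = zk := by
      ext (a | b)
      · simp [hstate a, add_right_comm]
      · simp
    refine ⟨Sum.elim (Sum.elim zprev wprev) (Sum.elim wk (zk ∘ Sum.inr)),
      ⟨⟨⟨hz, hw⟩, hwk⟩, ?_⟩, ?_⟩
    · rw [← sub_eq_zero, ← hconstraint, hzk, hdyn]
    · rw [predictionLift_mulVec, hzk]
  · rintro ⟨p, ⟨⟨⟨hz, hw⟩, hwk⟩, hR⟩, rfl⟩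
    obtain ⟨zprev, wprev, wk, y, rfl⟩ :
        ∃ zprev wprev wk y, p = Sum.elim (Sum.elim zprev wprev) (Sum.elim wk y) :=
      ⟨p ∘ Sum.inl ∘ Sum.inl, p ∘ Sum.inl ∘ Sum.inr, p ∘ Sum.inr ∘ Sum.inl, p ∘ Sum.inr ∘ Sum.inr,
        by simp only [← Function.comp_assoc, Sum.elim_comp_inl_inr]⟩
    refine ⟨zprev, hz, wprev, hw, wk, hwk, fun a => ?_, ?_⟩
    · rw [predictionLift_mulVec]
      simp [add_right_comm]
    · rw [predictionLift_mulVec, hconstraint, hR, sub_self]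

end Prediction

/-- Exactness of the prediction step (Remark 4): the line zonotope `Z̄` of Lemma 1 equals
exactly the feasible state set at time `k`:
`Z̄ = {z_k = (Ã z_{k−1} + B̃ u_{k−1} + B̃_w w_{k−1}, ž_k) : z_{k−1} ∈ Ẑ, ž_k ∈ ℝ^{n−n_z},
w_{k−1}, w_k ∈ W, Ǎ z_k + B̌ u_k + B̌_w w_k = 0}`. -/
theorem lz_prediction_step_exact
    {α β υ ω dh gh ch dw gw cw' : Type*}
    [Fintype α] [Fintype β] [DecidableEq β] [Fintype υ] [Fintype ω]
    [Fintype dh] [Fintype gh] [Fintype dw] [Fintype gw]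
    (tA : Matrix α (α ⊕ β) ℝ) (tB : Matrix α υ ℝ) (tBw : Matrix α ω ℝ)
    (cA : Matrix β (α ⊕ β) ℝ) (cB : Matrix β υ ℝ) (cBw : Matrix β ω ℝ)
    (u0 u1 : υ → ℝ)
    (hM : Matrix (α ⊕ β) dh ℝ) (hG : Matrix (α ⊕ β) gh ℝ) (hc : (α ⊕ β) → ℝ)
    (hS : Matrix ch dh ℝ) (hA : Matrix ch gh ℝ) (hb : ch → ℝ)
    (Mw : Matrix ω dw ℝ) (Gw : Matrix ω gw ℝ) (cw : ω → ℝ)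
    (Sw : Matrix cw' dw ℝ) (Aw : Matrix cw' gw ℝ) (bw : cw' → ℝ) :
    LZ
      -- M̄
      (fromBlocks (fromCols (tA * hM) (tBw * Mw)) 0
                  0 (fromCols (0 : Matrix β dw ℝ) (1 : Matrix β β ℝ)))
      -- Ḡ
      (fromBlocks (fromCols (tA * hG) (tBw * Gw)) (0 : Matrix α gw ℝ) 0 0)
      -- c̄
      (Sum.elim (tA *ᵥ hc + tB *ᵥ u0 + tBw *ᵥ cw) 0)
      -- S̄
      (fromRows
        (fromBlocks (fromBlocks hS 0 0 Sw) 0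
                    0 (fromCols Sw (0 : Matrix cw' β ℝ)))
        (fromCols
          (fromCols (cA * fromRows (tA * hM) (0 : Matrix β dh ℝ))
                       (cA * fromRows (tBw * Mw) (0 : Matrix β dw ℝ)))
          (fromCols (cBw * Mw)
                       (cA * fromRows (0 : Matrix α β ℝ) (1 : Matrix β β ℝ)))))
      -- Ā
      (fromRows
        (fromBlocks (fromBlocks hA 0 0 Aw) 0 0 Aw)
        (fromCols
          (fromCols (cA * fromRows (tA * hG) (0 : Matrix β gh ℝ))
                       (cA * fromRows (tBw * Gw) (0 : Matrix β gw ℝ)))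
          (cBw * Gw)))
      -- b̄
      (Sum.elim (Sum.elim (Sum.elim hb bw) bw)
        (-(cA *ᵥ (Sum.elim (tA *ᵥ hc + tB *ᵥ u0 + tBw *ᵥ cw) 0))
          - cB *ᵥ u1 - cBw *ᵥ cw))
    =
    {zk : (α ⊕ β) → ℝ |
      ∃ zprev ∈ LZ hM hG hc hS hA hb,
      ∃ wprev ∈ LZ Mw Gw cw Sw Aw bw,
      ∃ wk ∈ LZ Mw Gw cw Sw Aw bw,
        (∀ a, zk (Sum.inl a) = (tA *ᵥ zprev + tB *ᵥ u0 + tBw *ᵥ wprev) a)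
        ∧ cA *ᵥ zk + cB *ᵥ u1 + cBw *ᵥ wk = 0} := by
  have hcenter : Sum.elim (tA *ᵥ hc + tB *ᵥ u0 + tBw *ᵥ cw) (0 : β → ℝ) =
      Sum.elim (tA *ᵥ hc + tBw *ᵥ cw) 0 + Sum.elim (tB *ᵥ u0) 0 := by
    rw [← Sum.elim_add_add, add_zero, add_right_comm]
  rw [prediction_feasible_set_eq_image, LZ.setOf_comp_inl_mem_and_comp_inr_mem,
    LZ.setOf_comp_inl_mem, LZ.setOf_comp_inl_mem_and_comp_inr_mem, LZ.inter_setOf_mulVec_eq,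
    LZ.image_mulVec_add]
  congr 1
  case e_c => rw [predictionLift_mulVec, hcenter]
  case e_b =>
    rw [predictionConstraint_mulVec, hcenter, mulVec_add]
    congr 1
    abel
  all_goals simp only [predictionLift, predictionConstraint, fromBlocks_multiply,
    fromCols_mul_fromBlocks, fromCols_mul_fromRows, Matrix.mul_assoc, fromRows_mul,
    Matrix.mul_zero, Matrix.zero_mul, Matrix.mul_one, add_zero, zero_add]
end

section
/- Separation condition for line zonotopes with affine input dependence (Theorem 1, abstract form): For i = 1, 2 let Y_i(u) = LZ(M_i, G_i, c_i + P_i u, S_i, A_i, b_i + Q_i u) ⊆ ℝ^p be line zonotopes whose centers and constraint vectors depend affinely on u ∈ ℝ^m, with P_i ∈ ℝ^{p×m} and Q_i ∈ ℝ^{n_{c_i}×m}. Then Y_1(u) ∩ Y_2(u) = ∅ if and only if the stacked vector [(P_2 − P_1)u; Q_1 u; Q_2 u] does NOT belong to the line zonotope 𝒴 with lines [(M_1, −M_2); (S_1, 0); (0, S_2)], generators [(G_1, −G_2); (A_1, 0); (0, A_2)], and center [c_1 − c_2; −b_1; −b_2] (and no constraints). -/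
/-!
A common point of the two line zonotopes is the same thing as a choice of factors
`(δ₁, ξ₁, δ₂, ξ₂)` satisfying both constraint systems and giving equal points. Stacking the
point equation and the two constraint equations into one linear system says exactly that `0`
lies in the unconstrained line zonotope with the block matrices of the statement and center
`[c₁ − c₂; −b₁; −b₂]`, for arbitrary centers and constraint vectors. With the affine
dependence on `u`, that center is shifted by `−[(P₂ − P₁)u; Q₁u; Q₂u]`, and translating the
center back moves the shift onto the point.
-/

open Matrix

theorem add_mem_LZ_iff {n nδ ng nc : Type*} [Fintype nδ] [Fintype ng]
    (M : Matrix n nδ ℝ) (G : Matrix n ng ℝ) (c : n → ℝ)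
    (S : Matrix nc nδ ℝ) (A : Matrix nc ng ℝ) (b : nc → ℝ) (x v : n → ℝ) :
    x + v ∈ LZ M G c S A b ↔ x ∈ LZ M G (c - v) S A b := by
  refine exists₂_congr fun δ ξ => and_congr_right' <| and_congr_right' ?_
  rw [sub_add_eq_add_sub, sub_add_eq_add_sub, eq_sub_iff_add_eq]

theorem fromRows_fromCols_fromBlocks_mulVec_sumElim {p r1 r2 a1 a2 : Type*}
    [Fintype a1] [Fintype a2]
    (X1 : Matrix p a1 ℝ) (X2 : Matrix p a2 ℝ) (Y1 : Matrix r1 a1 ℝ) (Y2 : Matrix r2 a2 ℝ)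
    (v1 : a1 → ℝ) (v2 : a2 → ℝ) :
    fromRows (fromCols X1 (-X2)) (fromBlocks Y1 0 0 Y2) *ᵥ Sum.elim v1 v2 =
      Sum.elim (X1 *ᵥ v1 - X2 *ᵥ v2) (Sum.elim (Y1 *ᵥ v1) (Y2 *ᵥ v2)) := by
  simp [fromRows_mulVec, fromBlocks_mulVec, neg_mulVec, sub_eq_add_neg]

theorem inter_LZ_nonempty_iff_zero_mem {p d1 g1 nc1 d2 g2 nc2 nc : Type*}
    [Fintype d1] [Fintype g1] [Fintype d2] [Fintype g2] [IsEmpty nc]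
    (M1 : Matrix p d1 ℝ) (G1 : Matrix p g1 ℝ) (c1 : p → ℝ)
    (S1 : Matrix nc1 d1 ℝ) (A1 : Matrix nc1 g1 ℝ) (b1 : nc1 → ℝ)
    (M2 : Matrix p d2 ℝ) (G2 : Matrix p g2 ℝ) (c2 : p → ℝ)
    (S2 : Matrix nc2 d2 ℝ) (A2 : Matrix nc2 g2 ℝ) (b2 : nc2 → ℝ)
    (S : Matrix nc (d1 ⊕ d2) ℝ) (A : Matrix nc (g1 ⊕ g2) ℝ) (b : nc → ℝ) :
    (LZ M1 G1 c1 S1 A1 b1 ∩ LZ M2 G2 c2 S2 A2 b2).Nonempty ↔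
      0 ∈ LZ (fromRows (fromCols M1 (-M2)) (fromBlocks S1 0 0 S2))
        (fromRows (fromCols G1 (-G2)) (fromBlocks A1 0 0 A2))
        (Sum.elim (c1 - c2) (Sum.elim (-b1) (-b2))) S A b := by
  constructor
  · rintro ⟨x, ⟨δ1, ξ1, hξ1, hb1, rfl⟩, δ2, ξ2, hξ2, hb2, hx⟩
    refine ⟨Sum.elim δ1 δ2, Sum.elim ξ1 ξ2, Sum.forall.2 ⟨hξ1, hξ2⟩, Subsingleton.elim _ _, ?_⟩
    simp only [fromRows_fromCols_fromBlocks_mulVec_sumElim, ← Sum.elim_add_add,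
      ← Sum.elim_zero_zero, Sum.elim_eq_iff]
    refine ⟨?_, ?_, ?_⟩
    · linear_combination (norm := module) -hx
    · linear_combination (norm := module) -hb1
    · linear_combination (norm := module) -hb2
  · rintro ⟨δ, ξ, hξ, -, h0⟩
    rw [← Sum.elim_comp_inl_inr δ, ← Sum.elim_comp_inl_inr ξ] at h0
    simp only [fromRows_fromCols_fromBlocks_mulVec_sumElim, ← Sum.elim_add_add,
      ← Sum.elim_zero_zero, Sum.elim_eq_iff] at h0
    obtain ⟨hx, hb1, hb2⟩ := h0
    refine ⟨c1 + M1 *ᵥ (δ ∘ Sum.inl) + G1 *ᵥ (ξ ∘ Sum.inl),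
      ⟨δ ∘ Sum.inl, ξ ∘ Sum.inl, fun i => hξ _, ?_, rfl⟩,
      ⟨δ ∘ Sum.inr, ξ ∘ Sum.inr, fun i => hξ _, ?_, ?_⟩⟩
    · linear_combination (norm := module) -hb1
    · linear_combination (norm := module) -hb2
    · linear_combination (norm := module) -hx

/-- Separation condition for line zonotopes with affine input dependence (Theorem 1,
abstract form): `Y_1(u) ∩ Y_2(u) = ∅` iff `[(P_2 − P_1)u; Q_1 u; Q_2 u]` does not belong to
the (unconstrained) line zonotope with lines `[(M_1,−M_2);(S_1,0);(0,S_2)]`, generators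
`[(G_1,−G_2);(A_1,0);(0,A_2)]` and center `[c_1 − c_2; −b_1; −b_2]`. -/
theorem lz_separation_iff {p m d1 g1 nc1 d2 g2 nc2 : Type*}
    [Fintype m] [Fintype d1] [Fintype g1] [Fintype d2] [Fintype g2]
    (M1 : Matrix p d1 ℝ) (G1 : Matrix p g1 ℝ) (c1 : p → ℝ)
    (S1 : Matrix nc1 d1 ℝ) (A1 : Matrix nc1 g1 ℝ) (b1 : nc1 → ℝ)
    (P1 : Matrix p m ℝ) (Q1 : Matrix nc1 m ℝ)
    (M2 : Matrix p d2 ℝ) (G2 : Matrix p g2 ℝ) (c2 : p → ℝ)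
    (S2 : Matrix nc2 d2 ℝ) (A2 : Matrix nc2 g2 ℝ) (b2 : nc2 → ℝ)
    (P2 : Matrix p m ℝ) (Q2 : Matrix nc2 m ℝ)
    (u : m → ℝ) :
    LZ M1 G1 (c1 + P1 *ᵥ u) S1 A1 (b1 + Q1 *ᵥ u)
        ∩ LZ M2 G2 (c2 + P2 *ᵥ u) S2 A2 (b2 + Q2 *ᵥ u) = ∅ ↔
      Sum.elim ((P2 - P1) *ᵥ u) (Sum.elim (Q1 *ᵥ u) (Q2 *ᵥ u)) ∉
        LZ (fromRows (fromCols M1 (-M2)) (fromBlocks S1 0 0 S2))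
           (fromRows (fromCols G1 (-G2)) (fromBlocks A1 0 0 A2))
           (Sum.elim (c1 - c2) (Sum.elim (-b1) (-b2)))
           (0 : Matrix (Fin 0) (d1 ⊕ d2) ℝ) (0 : Matrix (Fin 0) (g1 ⊕ g2) ℝ)
           (0 : Fin 0 → ℝ) := by
  have hcenter :
      Sum.elim (c1 + P1 *ᵥ u - (c2 + P2 *ᵥ u)) (Sum.elim (-(b1 + Q1 *ᵥ u)) (-(b2 + Q2 *ᵥ u))) =
        Sum.elim (c1 - c2) (Sum.elim (-b1) (-b2)) -
          Sum.elim ((P2 - P1) *ᵥ u) (Sum.elim (Q1 *ᵥ u) (Q2 *ᵥ u)) := by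
    simp only [← Sum.elim_sub_sub, sub_mulVec, Sum.elim_eq_iff]
    refine ⟨?_, ?_, ?_⟩ <;> abel
  rw [← Set.not_nonempty_iff_eq_empty, inter_LZ_nonempty_iff_zero_mem (nc := Fin 0), hcenter,
    ← add_mem_LZ_iff, zero_add]
end

section
/- Linear-program characterization of non-membership in a line zonotope (Lemma 2): Let Z = LZ(M, G, c, S, A, b) ⊆ ℝ^n and p ∈ ℝ^n. Assume the equality system is feasible, i.e. there exist δ ∈ ℝ^{n_δ} and ξ ∈ ℝ^{n_g} with Mδ + Gξ + c = p and Sδ + Aξ = b. Define κ̂ = inf { κ ∈ ℝ : ∃ δ ∈ ℝ^{n_δ}, ξ ∈ ℝ^{n_g}, ‖ξ‖_∞ ≤ 1 + κ, Mδ + Gξ + c = p, Sδ + Aξ = b }. Then p ∉ Z if and only if κ̂ > 0. -/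
open Matrix

/-!
The feasible generator vectors `Ξ = {ξ | ∃ δ, Mδ + Gξ + c = p, Sδ + Aξ = b}` form the preimage of
the finite-dimensional, hence closed, subspace `range (M; S)` under a continuous affine map, so
`Ξ` is closed. In the sup norm a nonempty closed `Ξ` attains its distance `d` to the origin, so the
admissible `κ` are exactly those with `d ≤ 1 + κ` and `κ̂ = d - 1`. Thus `κ̂ > 0` iff every feasible
`ξ` has `‖ξ‖_∞ > 1`, which is `p ∉ LZ`. Without generators every `κ` is admissible and `κ̂ = 0`.
-/

section ClosedFeasibleSet

variable {𝕜 U V W : Type*} [NontriviallyNormedField 𝕜] [CompleteSpace 𝕜]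
  [AddCommGroup U] [Module 𝕜 U] [TopologicalSpace U] [IsTopologicalAddGroup U]
  [ContinuousSMul 𝕜 U] [T2Space U] [FiniteDimensional 𝕜 U]
  [AddCommGroup V] [Module 𝕜 V] [FiniteDimensional 𝕜 V]
  [AddCommGroup W] [Module 𝕜 W] [TopologicalSpace W] [IsTopologicalAddGroup W]
  [ContinuousSMul 𝕜 W] [T2Space W]

theorem isClosed_setOf_exists_add_eq (f : V →ₗ[𝕜] W) (g : U →ₗ[𝕜] W) (w : W) :
    IsClosed {u | ∃ v, f v + g u = w} := by
  have hpre : {u | ∃ v, f v + g u = w} = (fun u => w - g u) ⁻¹' (LinearMap.range f : Set W) := by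
    ext u
    simp [eq_sub_iff_add_eq]
  rw [hpre]
  exact (Submodule.closed_of_finiteDimensional _).preimage
    (continuous_const.sub g.continuous_of_finiteDimensional)

end ClosedFeasibleSet

theorem isClosed_setOf_exists_mulVec_eq {n nδ ng nc : Type*} [Fintype nδ] [Fintype ng]
    (M : Matrix n nδ ℝ) (G : Matrix n ng ℝ) (c : n → ℝ)
    (S : Matrix nc nδ ℝ) (A : Matrix nc ng ℝ) (b : nc → ℝ) (p : n → ℝ) :
    IsClosed {ξ : ng → ℝ | ∃ δ, M *ᵥ δ + G *ᵥ ξ + c = p ∧ S *ᵥ δ + A *ᵥ ξ = b} := by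
  convert isClosed_setOf_exists_add_eq (M.mulVecLin.prod S.mulVecLin)
    (G.mulVecLin.prod A.mulVecLin) (p - c, b) using 4
  simp [Prod.ext_iff, eq_sub_iff_add_eq]

theorem exists_mem_norm_le_iff_infDist_le {E : Type*} [SeminormedAddCommGroup E] [ProperSpace E]
    {Ξ : Set E} (hΞ : IsClosed Ξ) (hne : Ξ.Nonempty) (r : ℝ) :
    (∃ ξ ∈ Ξ, ‖ξ‖ ≤ r) ↔ Metric.infDist 0 Ξ ≤ r := by
  constructor
  · rintro ⟨ξ, hξ, hr⟩
    simpa using (Metric.infDist_le_dist_of_mem hξ).trans (by simpa using hr)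
  · intro hr
    obtain ⟨ξ, hξ, hdist⟩ := hΞ.exists_infDist_eq_dist hne 0
    exact ⟨ξ, hξ, by simpa [hdist] using hr⟩

theorem zero_lt_sInf_setOf_exists_abs_le_one_add_iff {ι : Type*} [Fintype ι]
    {Ξ : Set (ι → ℝ)} (hΞ : IsClosed Ξ) (hne : Ξ.Nonempty) :
    0 < sInf {κ : ℝ | ∃ ξ ∈ Ξ, ∀ i, |ξ i| ≤ 1 + κ} ↔ ¬∃ ξ ∈ Ξ, ∀ i, |ξ i| ≤ 1 := by
  rcases isEmpty_or_nonempty ι with hι | hι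
  · have hbox : ∀ κ : ℝ, ∃ ξ ∈ Ξ, ∀ i, |ξ i| ≤ 1 + κ :=
      fun _ => ⟨hne.some, hne.some_mem, isEmptyElim⟩
    have hK : {κ : ℝ | ∃ ξ ∈ Ξ, ∀ i, |ξ i| ≤ 1 + κ} = Set.univ := Set.eq_univ_of_forall hbox
    rw [hK, Real.sInf_univ, lt_self_iff_false, false_iff, not_not]
    simpa using hbox 0
  · have hK : {κ : ℝ | ∃ ξ ∈ Ξ, ∀ i, |ξ i| ≤ 1 + κ} = Set.Ici (Metric.infDist 0 Ξ - 1) := by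
      ext κ
      simp only [Set.mem_ofPred_eq, Set.mem_Ici, sub_le_iff_le_add', ← Real.norm_eq_abs,
        ← pi_norm_le_iff_of_nonempty, exists_mem_norm_le_iff_infDist_le hΞ hne]
    have hzero : (0 : ℝ) ∈ {κ : ℝ | ∃ ξ ∈ Ξ, ∀ i, |ξ i| ≤ 1 + κ} ↔ ∃ ξ ∈ Ξ, ∀ i, |ξ i| ≤ 1 := by
      simp
    rw [← hzero, hK, csInf_Ici, Set.mem_Ici, not_le]

/-- Linear-program characterization of non-membership in a line zonotope (Lemma 2):
if the equality system `Mδ + Gξ + c = p`, `Sδ + Aξ = b` is feasible, then `p ∉ Z` iff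
`κ̂ = inf {κ : ∃ δ ξ, ‖ξ‖_∞ ≤ 1 + κ, Mδ + Gξ + c = p, Sδ + Aξ = b} > 0`. -/
theorem lz_nonmembership_lp {n nδ ng nc : Type*} [Fintype nδ] [Fintype ng]
    (M : Matrix n nδ ℝ) (G : Matrix n ng ℝ) (c : n → ℝ)
    (S : Matrix nc nδ ℝ) (A : Matrix nc ng ℝ) (b : nc → ℝ) (p : n → ℝ)
    (hfeas : ∃ (δ : nδ → ℝ) (ξ : ng → ℝ),
      M *ᵥ δ + G *ᵥ ξ + c = p ∧ S *ᵥ δ + A *ᵥ ξ = b) :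
    p ∉ LZ M G c S A b ↔
      0 < sInf {κ : ℝ | ∃ (δ : nδ → ℝ) (ξ : ng → ℝ),
        (∀ i, |ξ i| ≤ 1 + κ) ∧ M *ᵥ δ + G *ᵥ ξ + c = p ∧ S *ᵥ δ + A *ᵥ ξ = b} := by
  set Ξ := {ξ : ng → ℝ | ∃ δ, M *ᵥ δ + G *ᵥ ξ + c = p ∧ S *ᵥ δ + A *ᵥ ξ = b}
  obtain ⟨δ₀, ξ₀, hfeas⟩ := hfeas
  have hK : {κ : ℝ | ∃ (δ : nδ → ℝ) (ξ : ng → ℝ),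
      (∀ i, |ξ i| ≤ 1 + κ) ∧ M *ᵥ δ + G *ᵥ ξ + c = p ∧ S *ᵥ δ + A *ᵥ ξ = b} =
      {κ : ℝ | ∃ ξ ∈ Ξ, ∀ i, |ξ i| ≤ 1 + κ} := by
    ext κ
    simp only [Set.mem_ofPred_eq, Ξ]
    grind
  have hLZ : p ∈ LZ M G c S A b ↔ ∃ ξ ∈ Ξ, ∀ i, |ξ i| ≤ 1 := by
    simp only [LZ, Set.mem_ofPred_eq, Ξ, eq_comm (a := p), add_comm c]
    grind
  rw [hK, zero_lt_sInf_setOf_exists_abs_le_one_add_iff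
    (isClosed_setOf_exists_mulVec_eq M G c S A b p) ⟨ξ₀, δ₀, hfeas⟩, hLZ]
end

section
/- Reduction from a line zonotope to a zonotope by block elimination of lines (Lemma 3): Let r, s, m, g ∈ ℕ, and consider matrices M⁺ ∈ ℝ^{r×r} invertible, M⁻ ∈ ℝ^{s×r}, G⁺ ∈ ℝ^{r×g}, G⁻ ∈ ℝ^{s×g}, c⁺ ∈ ℝ^r, c⁻ ∈ ℝ^s, N⁺ ∈ ℝ^{r×m}, N⁻ ∈ ℝ^{s×m}. Define G̊ = G⁻ − M⁻ (M⁺)^{-1} G⁺, c̊ = c⁻ − M⁻ (M⁺)^{-1} c⁺, and N̊ = N⁻ − M⁻ (M⁺)^{-1} N⁺. Then for every ξ_u ∈ ℝ^m: the vector [N⁺; N⁻] ξ_u does NOT belong to the (unconstrained) line zonotope { [M⁺; M⁻] δ + [G⁺; G⁻] ξ + [c⁺; c⁻] : δ ∈ ℝ^r, ‖ξ‖_∞ ≤ 1 } if and only if N̊ ξ_u does NOT belong to the zonotope { G̊ ξ + c̊ : ‖ξ‖_∞ ≤ 1 }. -/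
/-!
Writing the point and the set in block form, membership asks for `δ` and `ξ` with
`x⁺ = c⁺ + M⁺δ + G⁺ξ` and `x⁻ = c⁻ + M⁻δ + G⁻ξ`. Since `M⁺` is invertible, the first block
equation determines `δ = (M⁺)⁻¹ (x⁺ - c⁺ - G⁺ξ)`, and substituting it into the second one leaves
exactly `x⁻ - M⁻(M⁺)⁻¹x⁺ = c̊ + G̊ξ`, i.e. membership of the Schur-complemented point in the
zonotope.
-/

open Matrix

section LineZonotope

variable {n nδ ng nc : Type*} [Fintype nδ] [Fintype ng] [IsEmpty nc]
  {G : Matrix n ng ℝ} {c : n → ℝ} {S : Matrix nc nδ ℝ} {A : Matrix nc ng ℝ} {b : nc → ℝ}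
  {x : n → ℝ}

theorem mem_LZ_iff_of_isEmpty {M : Matrix n nδ ℝ} :
    x ∈ LZ M G c S A b ↔ ∃ δ ξ, (∀ i, |ξ i| ≤ 1) ∧ x = c + M *ᵥ δ + G *ᵥ ξ :=
  exists₂_congr fun δ ξ ↦ by simp only [Subsingleton.elim (S *ᵥ δ + A *ᵥ ξ) b, true_and]

theorem mem_LZ_zero_iff_of_isEmpty :
    x ∈ LZ (0 : Matrix n nδ ℝ) G c S A b ↔ ∃ ξ, (∀ i, |ξ i| ≤ 1) ∧ x = c + G *ᵥ ξ := by
  simp only [mem_LZ_iff_of_isEmpty, zero_mulVec, add_zero, exists_const]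

end LineZonotope

section BlockElimination

variable {R r s k : Type*} [CommRing R] [Fintype r] [DecidableEq r] [Fintype k]
  {P : Matrix r r R}

theorem exists_mulVec_eq_and_mulVec_eq_iff (hP : IsUnit P) (Q : Matrix s r R)
    (u : r → R) (v : s → R) :
    (∃ δ, P *ᵥ δ = u ∧ Q *ᵥ δ = v) ↔ v = (Q * P⁻¹) *ᵥ u := by
  have hdet := (isUnit_iff_isUnit_det P).mp hP
  constructor
  · rintro ⟨δ, rfl, rfl⟩
    rw [mulVec_mulVec, Matrix.mul_assoc, nonsing_inv_mul P hdet, Matrix.mul_one]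
  · rintro rfl
    exact ⟨P⁻¹ *ᵥ u, by rw [mulVec_mulVec, mul_nonsing_inv P hdet, one_mulVec],
      mulVec_mulVec _ _ _⟩

theorem exists_sumElim_eq_fromRows_iff (hP : IsUnit P) (Q : Matrix s r R)
    (Gp : Matrix r k R) (Gm : Matrix s k R) (cp xp : r → R) (cm xm : s → R) (ξ : k → R) :
    (∃ δ, Sum.elim xp xm = Sum.elim cp cm + fromRows P Q *ᵥ δ + fromRows Gp Gm *ᵥ ξ) ↔
      xm - (Q * P⁻¹) *ᵥ xp = cm - (Q * P⁻¹) *ᵥ cp + (Gm - Q * P⁻¹ * Gp) *ᵥ ξ := by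
  have hblocks : ∀ δ, (Sum.elim xp xm = Sum.elim cp cm + fromRows P Q *ᵥ δ
      + fromRows Gp Gm *ᵥ ξ) ↔
      P *ᵥ δ = xp - cp - Gp *ᵥ ξ ∧ Q *ᵥ δ = xm - cm - Gm *ᵥ ξ := fun δ ↦ by
    simp only [fromRows_mulVec, ← Sum.elim_add_add, Sum.elim_eq_iff]
    constructor
    · rintro ⟨h₁, h₂⟩
      exact ⟨by linear_combination h₁.symm, by linear_combination h₂.symm⟩
    · rintro ⟨h₁, h₂⟩
      exact ⟨by linear_combination -h₁, by linear_combination -h₂⟩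
  simp only [hblocks, exists_mulVec_eq_and_mulVec_eq_iff hP, mulVec_sub, sub_mulVec,
    mulVec_mulVec]
  constructor <;> intro h <;> linear_combination h

end BlockElimination

/-- Reduction from a line zonotope to a zonotope by block elimination of lines (Lemma 3):
with `M⁺` invertible, `G̊ = G⁻ − M⁻ (M⁺)⁻¹ G⁺`, `c̊ = c⁻ − M⁻ (M⁺)⁻¹ c⁺`,
`N̊ = N⁻ − M⁻ (M⁺)⁻¹ N⁺`, one has `[N⁺;N⁻]ξ_u ∉ LZ([M⁺;M⁻],[G⁺;G⁻],[c⁺;c⁻])` iff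
`N̊ ξ_u ∉ {G̊ ξ + c̊ : ‖ξ‖_∞ ≤ 1}`. -/
theorem lz_to_zonotope_line_elimination {r s m g : ℕ}
    (Mp : Matrix (Fin r) (Fin r) ℝ) (hMp : IsUnit Mp)
    (Mm : Matrix (Fin s) (Fin r) ℝ)
    (Gp : Matrix (Fin r) (Fin g) ℝ) (Gm : Matrix (Fin s) (Fin g) ℝ)
    (cp : Fin r → ℝ) (cm : Fin s → ℝ)
    (Np : Matrix (Fin r) (Fin m) ℝ) (Nm : Matrix (Fin s) (Fin m) ℝ)
    (ξu : Fin m → ℝ) :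
    ((fromRows Np Nm) *ᵥ ξu ∉
        LZ (fromRows Mp Mm) (fromRows Gp Gm) (Sum.elim cp cm)
          (0 : Matrix (Fin 0) (Fin r) ℝ) (0 : Matrix (Fin 0) (Fin g) ℝ)
          (0 : Fin 0 → ℝ)) ↔
      ((Nm - Mm * Mp⁻¹ * Np) *ᵥ ξu ∉
        LZ (0 : Matrix (Fin s) (Fin 0) ℝ) (Gm - Mm * Mp⁻¹ * Gp)
          (cm - (Mm * Mp⁻¹) *ᵥ cp)
          (0 : Matrix (Fin 0) (Fin 0) ℝ) (0 : Matrix (Fin 0) (Fin g) ℝ)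
          (0 : Fin 0 → ℝ)) := by
  rw [not_iff_not, mem_LZ_iff_of_isEmpty, mem_LZ_zero_iff_of_isEmpty, exists_comm]
  refine exists_congr fun ξ ↦ ?_
  rw [exists_and_left, fromRows_mulVec, exists_sumElim_eq_fromRows_iff hMp, mulVec_mulVec,
    ← sub_mulVec]
end

section
/- Input parametrization equivalence for separation over a constrained input set: let U = {c_u + G_u ξ_u : ξ_u ∈ ℝ^{n_{g_u}}, ‖ξ_u‖_∞ ≤ 1, A_u ξ_u = b_u} ⊆ ℝ^m be a constrained zonotope, and let M ∈ ℝ^{p×n_δ}, G ∈ ℝ^{p×n_g}, c ∈ ℝ^p, S ∈ ℝ^{q×n_δ}, A ∈ ℝ^{q×n_g}, b ∈ ℝ^q, N ∈ ℝ^{p×m}, Ω ∈ ℝ^{q×m}. Then 0 ∉ LZ( M, (G, −N G_u), c − N c_u, [S; 0], [(A, −Ω G_u); (0, A_u)], [b + Ω c_u; b_u] ) if and only if for every u ∈ U one has 0 ∉ LZ(M, G, c − N u, S, A, b + Ω u). -/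
/-!
The lifted line zonotope has generator vector `(ξ, ξ_u)`. Its last block of constraint rows,
`A_u ξ_u = b_u`, together with `‖ξ_u‖_∞ ≤ 1`, says exactly that `u = c_u + G_u ξ_u` lies in `U`;
substituting this `u`, the first block of rows and the center become those of
`LZ(M, G, c - N u, S, A, b + Ω u)`. So the lifted set is the union of these line zonotopes over
`u ∈ U`, and `0` avoids the union iff it avoids each of them.
-/

open Matrix

def CZ {n ng nc : Type*} [Fintype ng]
    (G : Matrix n ng ℝ) (c : n → ℝ) (A : Matrix nc ng ℝ) (b : nc → ℝ) : Set (n → ℝ) :=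
  {x | ∃ ξ : ng → ℝ, (∀ i, |ξ i| ≤ 1) ∧ A *ᵥ ξ = b ∧ x = c + G *ᵥ ξ}

section InputLift

variable {R : Type*} [CommRing R] {p q nδ ng m gu cu' : Type*}
  [Fintype nδ] [Fintype ng] [Fintype m] [Fintype gu]
  (M : Matrix p nδ R) (G : Matrix p ng R) (c : p → R)
  (S : Matrix q nδ R) (A : Matrix q ng R) (b : q → R)
  (N : Matrix p m R) (Ω : Matrix q m R)
  (Gu : Matrix m gu R) (cu : m → R) (Au : Matrix cu' gu R) (bu : cu' → R)

theorem inputLift_constraint_iff (δ : nδ → R) (ξ : ng → R) (ξu : gu → R) :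
    fromRows S (0 : Matrix cu' nδ R) *ᵥ δ
        + fromRows (fromCols A (-(Ω * Gu))) (fromCols (0 : Matrix cu' ng R) Au) *ᵥ Sum.elim ξ ξu
        = Sum.elim (b + Ω *ᵥ cu) bu ↔
      S *ᵥ δ + A *ᵥ ξ = b + Ω *ᵥ (cu + Gu *ᵥ ξu) ∧ Au *ᵥ ξu = bu := by
  simp only [fromRows_mulVec, fromCols_mulVec_sumElim, zero_mulVec, zero_add,
    ← Sum.elim_add_add, Sum.elim_eq_iff, neg_mulVec, mulVec_mulVec, mulVec_add]
  refine and_congr_left fun _ ↦ ⟨fun h ↦ ?_, fun h ↦ ?_⟩ <;> linear_combination h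

theorem inputLift_center_eq (δ : nδ → R) (ξ : ng → R) (ξu : gu → R) :
    c - N *ᵥ cu + M *ᵥ δ + fromCols G (-(N * Gu)) *ᵥ Sum.elim ξ ξu =
      c - N *ᵥ (cu + Gu *ᵥ ξu) + M *ᵥ δ + G *ᵥ ξ := by
  rw [fromCols_mulVec_sumElim, neg_mulVec, ← mulVec_mulVec, mulVec_add]
  ring

end InputLift

theorem mem_LZ_inputLift_iff {p q nδ ng m gu cu' : Type*}
    [Fintype nδ] [Fintype ng] [Fintype m] [Fintype gu]
    (M : Matrix p nδ ℝ) (G : Matrix p ng ℝ) (c : p → ℝ)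
    (S : Matrix q nδ ℝ) (A : Matrix q ng ℝ) (b : q → ℝ)
    (N : Matrix p m ℝ) (Ω : Matrix q m ℝ)
    (Gu : Matrix m gu ℝ) (cu : m → ℝ) (Au : Matrix cu' gu ℝ) (bu : cu' → ℝ) (x : p → ℝ) :
    x ∈ LZ M (fromCols G (-(N * Gu))) (c - N *ᵥ cu) (fromRows S (0 : Matrix cu' nδ ℝ))
        (fromRows (fromCols A (-(Ω * Gu))) (fromCols (0 : Matrix cu' ng ℝ) Au))
        (Sum.elim (b + Ω *ᵥ cu) bu) ↔
      ∃ u ∈ CZ Gu cu Au bu, x ∈ LZ M G (c - N *ᵥ u) S A (b + Ω *ᵥ u) := by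
  constructor
  · rintro ⟨δ, ξ, hξ, hcon, rfl⟩
    rw [← Sum.elim_comp_inl_inr ξ, inputLift_constraint_iff] at hcon
    rw [← Sum.elim_comp_inl_inr ξ, inputLift_center_eq]
    exact ⟨_, ⟨ξ ∘ Sum.inr, fun i ↦ hξ _, hcon.2, rfl⟩, δ, ξ ∘ Sum.inl, fun i ↦ hξ _, hcon.1, rfl⟩
  · rintro ⟨_, ⟨ξu, hξu, hcz, rfl⟩, δ, ξ, hξ, hlz, rfl⟩
    exact ⟨δ, Sum.elim ξ ξu, Sum.forall.2 ⟨hξ, hξu⟩,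
      (inputLift_constraint_iff ..).2 ⟨hlz, hcz⟩, (inputLift_center_eq ..).symm⟩

/-- Input parametrization equivalence for separation over a constrained input set
`U = {c_u + G_u ξ_u : ‖ξ_u‖_∞ ≤ 1, A_u ξ_u = b_u}`:
`0 ∉ LZ(M, (G, −N G_u), c − N c_u, [S;0], [(A,−Ω G_u);(0,A_u)], [b + Ω c_u; b_u])`
iff `0 ∉ LZ(M, G, c − N u, S, A, b + Ω u)` for every `u ∈ U`. -/
theorem lz_input_parametrization {p q nδ ng m gu cu' : Type*}
    [Fintype nδ] [Fintype ng] [Fintype m] [Fintype gu]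
    (M : Matrix p nδ ℝ) (G : Matrix p ng ℝ) (c : p → ℝ)
    (S : Matrix q nδ ℝ) (A : Matrix q ng ℝ) (b : q → ℝ)
    (N : Matrix p m ℝ) (Ω : Matrix q m ℝ)
    (Gu : Matrix m gu ℝ) (cu : m → ℝ) (Au : Matrix cu' gu ℝ) (bu : cu' → ℝ) :
    ((0 : p → ℝ) ∉
        LZ M (fromCols G (-(N * Gu))) (c - N *ᵥ cu)
          (fromRows S (0 : Matrix cu' nδ ℝ))
          (fromRows (fromCols A (-(Ω * Gu))) (fromCols (0 : Matrix cu' ng ℝ) Au))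
          (Sum.elim (b + Ω *ᵥ cu) bu)) ↔
      ∀ u ∈ {u : m → ℝ | ∃ ξu : gu → ℝ,
          (∀ i, |ξu i| ≤ 1) ∧ Au *ᵥ ξu = bu ∧ u = cu + Gu *ᵥ ξu},
        (0 : p → ℝ) ∉ LZ M G (c - N *ᵥ u) S A (b + Ω *ᵥ u) := by
  rw [mem_LZ_inputLift_iff]
  exact not_exists.trans (forall_congr' fun _ ↦ not_and)
end

section
/- Explicit line-zonotope representation of the common domain of p linear mappings: For i = 1, …, p let Z_i = LZ(M_i, G_i, c_i, S_i, A_i, b_i) ⊆ ℝ^{n_i} be line zonotopes and R_i ∈ ℝ^{n_i×n}. Define the stacked matrices R̃ = [R_1; …; R_p], M̃ = blkdiag(M_1, …, M_p), G̃ = blkdiag(G_1, …, G_p), S̃ = blkdiag(S_1, …, S_p), Ã = blkdiag(A_1, …, A_p), c̃ = [c_1; …; c_p], b̃ = [b_1; …; b_p], and let ñ_δ and ñ_g be the total numbers of lines and generators. Then {x ∈ ℝ^n : R_i x ∈ Z_i for all i = 1, …, p} equals the line zonotope with lines [I_n 0_{n×ñ_δ}], generators 0_{n×ñ_g}, center 0_n,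 and constraints S = [(0, S̃); (R̃, −M̃)], A = [Ã; −G̃], b = [b̃; c̃]. -/
/-!
Treat `x` itself as extra lines of the right-hand side: membership there says that some
`δ`, `ξ` with `‖ξ‖_∞ ≤ 1` solve the stacked constraint system. All stacked matrices are block
diagonal over `Σ i, _`, so that system splits into the `p` systems
`S_i δ_i + A_i ξ_i = b_i`, `R_i x = c_i + M_i δ_i + G_i ξ_i`, and a family of solutions
`(δ_i, ξ_i)` is the same thing as one solution indexed by the disjoint union.
-/

open Matrix

theorem forall_exists_iff_exists_sigma {ι γ : Type*} {β : ι → Type*}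
    {P : ∀ i, (β i → γ) → Prop} :
    (∀ i, ∃ a : β i → γ, P i a) ↔ ∃ a : (Σ i, β i) → γ, ∀ i, P i fun j ↦ a ⟨i, j⟩ :=
  Classical.skolem.trans
    ⟨fun ⟨f, hf⟩ ↦ ⟨fun r ↦ f r.1 r.2, hf⟩, fun ⟨a, ha⟩ ↦ ⟨fun i j ↦ a ⟨i, j⟩, ha⟩⟩

theorem blockDiagonal'_mulVec_apply {o : Type*} [Fintype o] [DecidableEq o] {m n : o → Type*}
    [∀ i, Fintype (n i)] {α : Type*} [NonUnitalNonAssocSemiring α] (T : ∀ i, Matrix (m i) (n i) α)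
    (v : (Σ i, n i) → α) (i : o) (k : m i) :
    (blockDiagonal' T *ᵥ v) ⟨i, k⟩ = (T i *ᵥ fun j ↦ v ⟨i, j⟩) k := by
  simp only [mulVec, dotProduct, blockDiagonal'_apply, Fintype.sum_sigma]
  rw [Finset.sum_eq_single i (fun j _ hj ↦ by simp [Ne.symm hj]) (by simp)]
  simp

theorem mem_LZ_fromCols_one_zero {n nδ ng nc : Type*} [Fintype n] [DecidableEq n] [Fintype nδ]
    [Fintype ng] (S : Matrix nc (n ⊕ nδ) ℝ) (A : Matrix nc ng ℝ) (b : nc → ℝ) (x : n → ℝ) :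
    x ∈ LZ (fromCols 1 0 : Matrix n (n ⊕ nδ) ℝ) (0 : Matrix n ng ℝ) 0 S A b ↔
      ∃ (δ : nδ → ℝ) (ξ : ng → ℝ), (∀ i, |ξ i| ≤ 1) ∧ S *ᵥ Sum.elim x δ + A *ᵥ ξ = b := by
  constructor
  · rintro ⟨δ, ξ, hξ, hb, rfl⟩
    refine ⟨δ ∘ Sum.inr, ξ, hξ, ?_⟩
    simpa [Sum.elim_comp_inl_inr] using hb
  · rintro ⟨δ, ξ, hξ, hb⟩
    exact ⟨Sum.elim x δ, ξ, hξ, hb, by simp⟩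

theorem stacked_constraint_iff {o m : Type*} [Fintype o] [DecidableEq o] [Fintype m]
    {ni di gi ci : o → Type*} [∀ i, Fintype (ni i)] [∀ i, Fintype (di i)] [∀ i, Fintype (gi i)]
    {α : Type*} [Ring α]
    (M : ∀ i, Matrix (ni i) (di i) α) (G : ∀ i, Matrix (ni i) (gi i) α) (c : ∀ i, ni i → α)
    (S : ∀ i, Matrix (ci i) (di i) α) (A : ∀ i, Matrix (ci i) (gi i) α) (b : ∀ i, ci i → α)
    (R : ∀ i, Matrix (ni i) m α) (x : m → α) (δ : (Σ i, di i) → α) (ξ : (Σ i, gi i) → α) :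
    fromRows (fromCols (0 : Matrix (Σ i, ci i) m α) (blockDiagonal' S))
        (fromCols (of fun (r : Σ i, ni i) j ↦ R r.1 r.2 j) (-blockDiagonal' M)) *ᵥ Sum.elim x δ +
      fromRows (blockDiagonal' A) (-blockDiagonal' G) *ᵥ ξ =
      Sum.elim (fun r : Σ i, ci i ↦ b r.1 r.2) (fun r : Σ i, ni i ↦ c r.1 r.2) ↔
    ∀ i, S i *ᵥ (fun j ↦ δ ⟨i, j⟩) + A i *ᵥ (fun j ↦ ξ ⟨i, j⟩) = b i ∧
      R i *ᵥ x = c i + M i *ᵥ (fun j ↦ δ ⟨i, j⟩) + G i *ᵥ (fun j ↦ ξ ⟨i, j⟩) := by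
  simp only [fromRows_mulVec, fromCols_mulVec_sumElim, ← Sum.elim_add_add, Sum.elim_eq_iff,
    zero_mulVec, zero_add, neg_mulVec, ← sub_eq_add_neg]
  simp only [funext_iff, Sigma.forall, Pi.add_apply, blockDiagonal'_mulVec_apply,
    ← forall_and, sub_sub, sub_eq_iff_eq_add, add_assoc]
  -- row `⟨i, k⟩` of the stacked `R̃` is row `k` of `R i` by definition
  rfl

/-- Explicit line-zonotope representation of the common domain of `p` linear mappings:
`{x : R_i x ∈ Z_i ∀ i}` equals the line zonotope with lines `[I_n 0]`, zero generators,
zero center, and constraints `S = [(0, S̃); (R̃, −M̃)]`, `A = [Ã; −G̃]`, `b = [b̃; c̃]`. -/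
theorem lz_common_domain {n p : ℕ} {ni di gi ci : Fin p → Type*}
    [∀ i, Fintype (ni i)] [∀ i, Fintype (di i)] [∀ i, Fintype (gi i)]
    (M : ∀ i, Matrix (ni i) (di i) ℝ) (G : ∀ i, Matrix (ni i) (gi i) ℝ)
    (c : ∀ i, ni i → ℝ)
    (S : ∀ i, Matrix (ci i) (di i) ℝ) (A : ∀ i, Matrix (ci i) (gi i) ℝ)
    (b : ∀ i, ci i → ℝ)
    (R : ∀ i, Matrix (ni i) (Fin n) ℝ) :
    {x : Fin n → ℝ | ∀ i, (R i) *ᵥ x ∈ LZ (M i) (G i) (c i) (S i) (A i) (b i)} =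
      LZ (fromCols (1 : Matrix (Fin n) (Fin n) ℝ) (0 : Matrix (Fin n) (Σ i, di i) ℝ))
         (0 : Matrix (Fin n) (Σ i, gi i) ℝ)
         (0 : Fin n → ℝ)
         (fromRows
           (fromCols (0 : Matrix (Σ i, ci i) (Fin n) ℝ) (blockDiagonal' S))
           (fromCols (Matrix.of fun (r : Σ i, ni i) j => R r.1 r.2 j)
                        (-(blockDiagonal' M))))
         (fromRows (blockDiagonal' A) (-(blockDiagonal' G)))
         (Sum.elim (fun r : Σ i, ci i => b r.1 r.2) (fun r : Σ i, ni i => c r.1 r.2)) := by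
  ext x
  rw [mem_LZ_fromCols_one_zero]
  simp only [Set.mem_ofPred_eq, LZ, stacked_constraint_iff, forall_exists_iff_exists_sigma,
    forall_and, Sigma.forall]
end

section
/- Explicit representation of the initial feasible set of a descriptor system: Let Z = LZ(M_0, G_0, c_0, S_0, A_0, b_0) ⊆ ℝ^n and W = LZ(M_w, G_w, c_w, S_w, A_w, b_w) ⊆ ℝ^{n_w} be line zonotopes, Ǎ ∈ ℝ^{s×n}, B̌_w ∈ ℝ^{s×n_w}, B̌ ∈ ℝ^{s×n_u}, and u ∈ ℝ^{n_u}. Then { z ∈ Z : ∃ w ∈ W, Ǎ z + B̌ u + B̌_w w = 0 } equals the line zonotope with lines [M_0 0], generators [G_0 0], center c_0, and constraints S = [blkdiag(S_0, S_w); (Ǎ M_0, B̌_w M_w)], A = [blkdiag(A_0, A_w); (Ǎ G_0, B̌_w G_w)], b = [b_0; b_w; −Ǎ c_0 − B̌_w c_w − B̌ u]. -/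
/-!
A point of the constrained set is fixed by the stacked variables `(δ₀, δ_w)` and
`(ξ₀, ξ_w)`: the block-diagonal rows are the constraints of `Z` and `W`, and the last block
row is `Ǎ z + B̌ u + B̌_w w = 0` with `z = c₀ + M₀ δ₀ + G₀ ξ₀` and `w = c_w + M_w δ_w + G_w ξ_w`
substituted.
-/

open Matrix

section Constraints

variable {m₁ m₂ k₁ k₂ l₁ l₂ R : Type*}

lemma fromRows_mulVec_add_fromRows_mulVec_eq_sumElim_iff [Semiring R] [Fintype k₁] [Fintype l₁]
    (S₁ : Matrix m₁ k₁ R) (S₂ : Matrix m₂ k₁ R) (A₁ : Matrix m₁ l₁ R) (A₂ : Matrix m₂ l₁ R)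
    (δ : k₁ → R) (ξ : l₁ → R) (b₁ : m₁ → R) (b₂ : m₂ → R) :
    fromRows S₁ S₂ *ᵥ δ + fromRows A₁ A₂ *ᵥ ξ = Sum.elim b₁ b₂ ↔
      S₁ *ᵥ δ + A₁ *ᵥ ξ = b₁ ∧ S₂ *ᵥ δ + A₂ *ᵥ ξ = b₂ := by
  rw [fromRows_mulVec, fromRows_mulVec, ← Sum.elim_add_add, Sum.elim_eq_iff]

lemma fromBlocks_diag_mulVec_add_eq_sumElim_iff [Semiring R] [Fintype k₁] [Fintype k₂]
    [Fintype l₁] [Fintype l₂] (S₁ : Matrix m₁ k₁ R) (S₂ : Matrix m₂ k₂ R) (A₁ : Matrix m₁ l₁ R)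
    (A₂ : Matrix m₂ l₂ R) (δ₁ : k₁ → R) (δ₂ : k₂ → R) (ξ₁ : l₁ → R) (ξ₂ : l₂ → R)
    (b₁ : m₁ → R) (b₂ : m₂ → R) :
    fromBlocks S₁ 0 0 S₂ *ᵥ Sum.elim δ₁ δ₂ + fromBlocks A₁ 0 0 A₂ *ᵥ Sum.elim ξ₁ ξ₂ =
        Sum.elim b₁ b₂ ↔
      S₁ *ᵥ δ₁ + A₁ *ᵥ ξ₁ = b₁ ∧ S₂ *ᵥ δ₂ + A₂ *ᵥ ξ₂ = b₂ := by
  simp only [fromBlocks_mulVec, Sum.elim_comp_inl, Sum.elim_comp_inr, zero_mulVec, add_zero,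
    zero_add, ← Sum.elim_add_add, Sum.elim_eq_iff]

lemma fromCols_mul_mulVec_add_eq_iff {s n w : Type*} [CommRing R] [Fintype n] [Fintype w]
    [Fintype k₁] [Fintype k₂] [Fintype l₁] [Fintype l₂] (P : Matrix s n R) (Q : Matrix s w R)
    (M₁ : Matrix n k₁ R) (G₁ : Matrix n l₁ R) (c₁ : n → R)
    (M₂ : Matrix w k₂ R) (G₂ : Matrix w l₂ R) (c₂ : w → R)
    (δ₁ : k₁ → R) (δ₂ : k₂ → R) (ξ₁ : l₁ → R) (ξ₂ : l₂ → R) (r : s → R) :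
    fromCols (P * M₁) (Q * M₂) *ᵥ Sum.elim δ₁ δ₂ + fromCols (P * G₁) (Q * G₂) *ᵥ Sum.elim ξ₁ ξ₂ =
        -(P *ᵥ c₁) - Q *ᵥ c₂ - r ↔
      P *ᵥ (c₁ + M₁ *ᵥ δ₁ + G₁ *ᵥ ξ₁) + r + Q *ᵥ (c₂ + M₂ *ᵥ δ₂ + G₂ *ᵥ ξ₂) = 0 := by
  simp only [fromCols_mulVec_sumElim, ← mulVec_mulVec, mulVec_add]
  constructor <;> intro h <;> linear_combination h

end Constraints

lemma mem_LZ_sum_iff {n k₁ k₂ l₁ l₂ m : Type*} [Fintype k₁] [Fintype k₂] [Fintype l₁]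
    [Fintype l₂] (M : Matrix n (k₁ ⊕ k₂) ℝ) (G : Matrix n (l₁ ⊕ l₂) ℝ) (c : n → ℝ)
    (S : Matrix m (k₁ ⊕ k₂) ℝ) (A : Matrix m (l₁ ⊕ l₂) ℝ) (b : m → ℝ) (x : n → ℝ) :
    x ∈ LZ M G c S A b ↔ ∃ (δ₁ : k₁ → ℝ) (δ₂ : k₂ → ℝ) (ξ₁ : l₁ → ℝ) (ξ₂ : l₂ → ℝ),
      (∀ i, |ξ₁ i| ≤ 1) ∧ (∀ i, |ξ₂ i| ≤ 1) ∧
      S *ᵥ Sum.elim δ₁ δ₂ + A *ᵥ Sum.elim ξ₁ ξ₂ = b ∧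
      x = c + M *ᵥ Sum.elim δ₁ δ₂ + G *ᵥ Sum.elim ξ₁ ξ₂ := by
  constructor
  · rintro ⟨δ, ξ, hξ, hb, hx⟩
    refine ⟨δ ∘ Sum.inl, δ ∘ Sum.inr, ξ ∘ Sum.inl, ξ ∘ Sum.inr, fun i => hξ _, fun i => hξ _, ?_⟩
    simpa only [Sum.elim_comp_inl_inr] using ⟨hb, hx⟩
  · rintro ⟨δ₁, δ₂, ξ₁, ξ₂, hξ₁, hξ₂, hb, hx⟩
    exact ⟨_, _, Sum.forall.2 ⟨hξ₁, hξ₂⟩, hb, hx⟩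

/-- Explicit representation of the initial feasible set of a descriptor system:
`{z ∈ Z : ∃ w ∈ W, Ǎz + B̌u + B̌_w w = 0}` is the line zonotope with lines `[M_0 0]`,
generators `[G_0 0]`, center `c_0`, and constraints
`S = [blkdiag(S_0,S_w); (Ǎ M_0, B̌_w M_w)]`, `A = [blkdiag(A_0,A_w); (Ǎ G_0, B̌_w G_w)]`,
`b = [b_0; b_w; −Ǎ c_0 − B̌_w c_w − B̌ u]`. -/
theorem lz_initial_feasible_set {n w nu s d0 g0 nc0 dw gw ncw : Type*}
    [Fintype n] [Fintype w] [Fintype nu]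
    [Fintype d0] [Fintype g0] [Fintype dw] [Fintype gw]
    (M0 : Matrix n d0 ℝ) (G0 : Matrix n g0 ℝ) (c0 : n → ℝ)
    (S0 : Matrix nc0 d0 ℝ) (A0 : Matrix nc0 g0 ℝ) (b0 : nc0 → ℝ)
    (Mw : Matrix w dw ℝ) (Gw : Matrix w gw ℝ) (cw : w → ℝ)
    (Sw : Matrix ncw dw ℝ) (Aw : Matrix ncw gw ℝ) (bw : ncw → ℝ)
    (cA : Matrix s n ℝ) (cBw : Matrix s w ℝ) (cB : Matrix s nu ℝ) (u : nu → ℝ) :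
    {z ∈ LZ M0 G0 c0 S0 A0 b0 | ∃ wv ∈ LZ Mw Gw cw Sw Aw bw,
        cA *ᵥ z + cB *ᵥ u + cBw *ᵥ wv = 0} =
      LZ (fromCols M0 (0 : Matrix n dw ℝ)) (fromCols G0 (0 : Matrix n gw ℝ)) c0
        (fromRows (fromBlocks S0 0 0 Sw) (fromCols (cA * M0) (cBw * Mw)))
        (fromRows (fromBlocks A0 0 0 Aw) (fromCols (cA * G0) (cBw * Gw)))
        (Sum.elim (Sum.elim b0 bw) (-(cA *ᵥ c0) - cBw *ᵥ cw - cB *ᵥ u)) := by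
  ext z
  simp only [mem_LZ_sum_iff, fromRows_mulVec_add_fromRows_mulVec_eq_sumElim_iff,
    fromBlocks_diag_mulVec_add_eq_sumElim_iff, fromCols_mul_mulVec_add_eq_iff]
  -- only after the coupling row is rewritten, or `fromCols_mulVec_sumElim` would split it first
  simp only [fromCols_mulVec_sumElim, zero_mulVec, add_zero]
  constructor
  · rintro ⟨⟨δ0, ξ0, hξ0, hb0, rfl⟩, _, ⟨δw, ξw, hξw, hbw, rfl⟩, hcoupling⟩
    exact ⟨δ0, δw, ξ0, ξw, hξ0, hξw, ⟨⟨hb0, hbw⟩, hcoupling⟩, rfl⟩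
  · rintro ⟨δ0, δw, ξ0, ξw, hξ0, hξw, ⟨⟨hb0, hbw⟩, hcoupling⟩, rfl⟩
    exact ⟨⟨δ0, ξ0, hξ0, hb0, rfl⟩, _, ⟨δw, ξw, hξw, hbw, rfl⟩, hcoupling⟩
end
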